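/- arXiv:2401.09007 — 10 statements merged into one kernel-verified Lean document; each statement's English description precedes it below -/
import Mathlib

section
/- With U = [[A,B],[C,D]] unitary as above, define for parameters θ, φ ∈ ℝ the operator W := R_𝔥(θ) U* R_𝔨(φ) U, where R_𝔥(θ) = e^{iθ}P_𝔥 + e^{-iθ}(I − P_𝔥) and R_𝔨(φ) = e^{iφ}P_𝔨 + e^{-iφ}(I − P_𝔨). Then W has the block form W = [[P(A*A), i Q(A*A) A*B],[i Q̄(D*D) B*A, P̄(D*D)]] on 𝔥 ⊕ 𝔥^⊥, where P(x) := e^{iθ}(e^{-iφ} + 2i sin(φ) x) and Q(x) := 2 e^{iθ} sin(φ), and where P̄, Q̄ denote the polynomials with complex-conjugated coefficients. -/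
/-!
Write `P_K` for the orthogonal projection onto `K`. Since `U` is an isometry, `U† U = 1` read off
in block form gives `A† P_𝔨 U + C† P_𝔨ᗮ U = P_𝔥` (and similarly for the second column), so in the
`𝔥`-row of `U† R_𝔨(φ) U = e^{iφ} U† P_𝔨 U + e^{-iφ} U† P_𝔨ᗮ U` the `C`-term can be eliminated:
`P_𝔥 U† R_𝔨(φ) U = e^{-iφ} P_𝔥 + (e^{iφ} - e^{-iφ}) A† P_𝔨 U`, with `e^{iφ} - e^{-iφ} = 2i sin φ`.
The `𝔥ᗮ`-row is the same computation with `B, D` and the phases swapped, which is what conjugating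
the coefficients of the polynomials does; left multiplication by `R_𝔥(θ)` only scales the rows.
-/

open ContinuousLinearMap Complex Submodule Polynomial

section Projection

variable {𝕜 E : Type*} [RCLike 𝕜] [NormedAddCommGroup E] [InnerProductSpace 𝕜 E]
  (K : Submodule 𝕜 E) [K.HasOrthogonalProjection]

/-- The paper's `R_𝔥(θ)` is `phaseShift 𝔥 (exp (θ * I)) (exp (-θ * I))`. -/
noncomputable def phaseShift (c d : 𝕜) : E →L[𝕜] E :=
  c • K.starProjection + d • (1 - K.starProjection)

variable {K}

theorem orthogonalProjectionOnto_phaseShift_apply (c d : 𝕜) (z : E) :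
    K.orthogonalProjectionOnto (phaseShift K c d z) = c • K.orthogonalProjectionOnto z := by
  simp [phaseShift, orthogonalProjectionOnto_starProjection_of_le le_rfl]

theorem orthogonalProjectionOnto_orthogonal_phaseShift_apply (c d : 𝕜) (z : E) :
    Kᗮ.orthogonalProjectionOnto (phaseShift K c d z) = d • Kᗮ.orthogonalProjectionOnto z := by
  simp [phaseShift,
    orthogonalProjectionOnto_orthogonal_apply_eq_zero (K.starProjection_apply_mem z)]

theorem orthogonalProjectionOnto_coe_add_coe (a : K) (b : Kᗮ) :
    K.orthogonalProjectionOnto (a + b) = a := by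
  rw [map_add, orthogonalProjectionOnto_mem_subspace_eq_self,
    orthogonalProjectionOnto_apply_of_mem_orthogonal b.2, add_zero]

theorem orthogonalProjectionOnto_orthogonal_coe_add_coe (a : K) (b : Kᗮ) :
    Kᗮ.orthogonalProjectionOnto (a + b) = b := by
  rw [map_add, orthogonalProjectionOnto_mem_subspace_eq_self,
    orthogonalProjectionOnto_orthogonal_apply_eq_zero a.2, zero_add]

theorem eq_coe_add_coe_of_orthogonalProjectionOnto_eq {z : E} {a : K} {b : Kᗮ}
    (ha : K.orthogonalProjectionOnto z = a) (hb : Kᗮ.orthogonalProjectionOnto z = b) :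
    z = a + b := by
  rw [← ha, ← hb, ← starProjection_apply, ← starProjection_apply,
    starProjection_add_starProjection_orthogonal]

end Projection

section Blocks

variable {𝕜 E F : Type*} [RCLike 𝕜]
  [NormedAddCommGroup E] [InnerProductSpace 𝕜 E] [CompleteSpace E]
  [NormedAddCommGroup F] [InnerProductSpace 𝕜 F] [CompleteSpace F]
  {K : Submodule 𝕜 E} {L : Submodule 𝕜 F} [CompleteSpace K] [CompleteSpace L]
  {U : E →L[𝕜] F} {A : K →L[𝕜] L} {C : K →L[𝕜] Lᗮ}

theorem orthogonalProjectionOnto_adjoint_apply_coe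
    (hA : ∀ x : K, A x = L.orthogonalProjectionOnto (U x)) (k : L) :
    K.orthogonalProjectionOnto (adjoint U k) = adjoint A k := by
  refine ext_inner_right 𝕜 fun x ↦ ?_
  rw [inner_orthogonalProjectionOnto_eq_of_mem_right, adjoint_inner_left, adjoint_inner_left, hA,
    inner_orthogonalProjectionOnto_eq_of_mem_left]

theorem orthogonalProjectionOnto_adjoint_apply
    (hA : ∀ x : K, A x = L.orthogonalProjectionOnto (U x))
    (hC : ∀ x : K, C x = Lᗮ.orthogonalProjectionOnto (U x)) (w : F) :
    K.orthogonalProjectionOnto (adjoint U w) =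
      adjoint A (L.orthogonalProjectionOnto w) + adjoint C (Lᗮ.orthogonalProjectionOnto w) := by
  conv_lhs => rw [← L.starProjection_add_starProjection_orthogonal w]
  rw [map_add, map_add, starProjection_apply, starProjection_apply,
    orthogonalProjectionOnto_adjoint_apply_coe hA, orthogonalProjectionOnto_adjoint_apply_coe hC]

theorem adjoint_apply_add_adjoint_apply_of_isometry (hU : adjoint U ∘L U = 1)
    (hA : ∀ x : K, A x = L.orthogonalProjectionOnto (U x))
    (hC : ∀ x : K, C x = Lᗮ.orthogonalProjectionOnto (U x)) (z : E) :
    adjoint A (L.orthogonalProjectionOnto (U z)) + adjoint C (Lᗮ.orthogonalProjectionOnto (U z)) =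
      K.orthogonalProjectionOnto z := by
  rw [← orthogonalProjectionOnto_adjoint_apply hA hC, ← comp_apply (adjoint U), hU,
    one_apply_eq_self]

theorem orthogonalProjectionOnto_adjoint_phaseShift_apply (hU : adjoint U ∘L U = 1)
    (hA : ∀ x : K, A x = L.orthogonalProjectionOnto (U x))
    (hC : ∀ x : K, C x = Lᗮ.orthogonalProjectionOnto (U x)) (c d : 𝕜) (z : E) :
    K.orthogonalProjectionOnto (adjoint U (phaseShift L c d (U z))) =
      d • K.orthogonalProjectionOnto z +
        (c - d) • adjoint A (L.orthogonalProjectionOnto (U z)) := by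
  rw [orthogonalProjectionOnto_adjoint_apply hA hC, orthogonalProjectionOnto_phaseShift_apply,
    orthogonalProjectionOnto_orthogonal_phaseShift_apply, map_smul, map_smul,
    ← adjoint_apply_add_adjoint_apply_of_isometry hU hA hC z]
  module

theorem orthogonalProjectionOnto_adjoint_phaseShift_apply' (hU : adjoint U ∘L U = 1)
    (hA : ∀ x : K, A x = L.orthogonalProjectionOnto (U x))
    (hC : ∀ x : K, C x = Lᗮ.orthogonalProjectionOnto (U x)) (c d : 𝕜) (z : E) :
    K.orthogonalProjectionOnto (adjoint U (phaseShift L c d (U z))) =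
      c • K.orthogonalProjectionOnto z +
        (d - c) • adjoint C (Lᗮ.orthogonalProjectionOnto (U z)) := by
  rw [orthogonalProjectionOnto_adjoint_apply hA hC, orthogonalProjectionOnto_phaseShift_apply,
    orthogonalProjectionOnto_orthogonal_phaseShift_apply, map_smul, map_smul,
    ← adjoint_apply_add_adjoint_apply_of_isometry hU hA hC z]
  module

end Blocks

section Polynomial

variable {R M : Type*} [CommSemiring R] [TopologicalSpace M] [AddCommGroup M] [Module R M]
  [ContinuousConstSMul R M] [IsTopologicalAddGroup M]

theorem aeval_C_apply (T : M →L[R] M) (a : R) (v : M) : aeval T (C a) v = a • v := by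
  simp

theorem aeval_C_add_C_mul_X_apply (T : M →L[R] M) (a b : R) (v : M) :
    aeval T (C a + C b * X) v = a • v + b • T v := by
  simp

end Polynomial

theorem exp_mul_I_sub_exp_neg_mul_I (φ : ℝ) :
    exp (φ * I) - exp (-φ * I) = 2 * I * Real.sin φ := by
  rw [ofReal_sin, exp_mul_I, exp_mul_I, cos_neg, sin_neg]
  ring

theorem conj_exp_ofReal_mul_I (θ : ℝ) : starRingEnd ℂ (exp (θ * I)) = exp (-θ * I) := by
  rw [← exp_conj, map_mul, conj_ofReal, conj_I, mul_neg, neg_mul]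

theorem conj_exp_neg_ofReal_mul_I (θ : ℝ) : starRingEnd ℂ (exp (-θ * I)) = exp (θ * I) := by
  simpa using conj_exp_ofReal_mul_I (-θ)

open ContinuousLinearMap Complex Submodule Polynomial in
theorem stmt3_general
    {H : Type*} [NormedAddCommGroup H] [InnerProductSpace ℂ H] [CompleteSpace H]
    (𝔥 𝔨 : Submodule ℂ H) [CompleteSpace 𝔥] [CompleteSpace 𝔨]
    (U : H →L[ℂ] H) (hU1 : adjoint U ∘L U = 1)
    (A : 𝔥 →L[ℂ] 𝔨) (B : 𝔥ᗮ →L[ℂ] 𝔨) (C : 𝔥 →L[ℂ] 𝔨ᗮ) (D : 𝔥ᗮ →L[ℂ] 𝔨ᗮ)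
    (hA : ∀ x : 𝔥, A x = orthogonalProjection 𝔨 (U x))
    (hB : ∀ y : 𝔥ᗮ, B y = orthogonalProjection 𝔨 (U y))
    (hC : ∀ x : 𝔥, C x = orthogonalProjection 𝔨ᗮ (U x))
    (hD : ∀ y : 𝔥ᗮ, D y = orthogonalProjection 𝔨ᗮ (U y))
    (θ φ : ℝ) (W : H →L[ℂ] H)
    (hW : W = (Complex.exp (θ * Complex.I) • (𝔥.subtypeL ∘L orthogonalProjection 𝔥) +
          Complex.exp (-θ * Complex.I) • (1 - 𝔥.subtypeL ∘L orthogonalProjection 𝔥)) ∘L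
        (adjoint U ∘L
          ((Complex.exp (φ * Complex.I) • (𝔨.subtypeL ∘L orthogonalProjection 𝔨) +
            Complex.exp (-φ * Complex.I) • (1 - 𝔨.subtypeL ∘L orthogonalProjection 𝔨)) ∘L U)))
    (Ppoly Qpoly : Polynomial ℂ)
    (hPpoly : Ppoly = Polynomial.C (Complex.exp (θ * Complex.I) * Complex.exp (-φ * Complex.I)) +
      Polynomial.C (Complex.exp (θ * Complex.I) * (2 * Complex.I * Real.sin φ)) * Polynomial.X)
    (hQpoly : Qpoly = Polynomial.C (2 * Complex.exp (θ * Complex.I) * Real.sin φ)) :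
    ∀ x : 𝔥, ∀ y : 𝔥ᗮ,
      W ((x : H) + (y : H)) =
        ((Polynomial.aeval (adjoint A ∘L A) Ppoly x +
          (Complex.I • (Polynomial.aeval (adjoint A ∘L A) Qpoly ∘L (adjoint A ∘L B))) y : 𝔥) : H) +
        (((Complex.I • (Polynomial.aeval (adjoint D ∘L D) (Qpoly.map (starRingEnd ℂ)) ∘L
            (adjoint B ∘L A))) x +
          Polynomial.aeval (adjoint D ∘L D) (Ppoly.map (starRingEnd ℂ)) y : 𝔥ᗮ) : H) := by
  intro x y
  have hW' : W = phaseShift 𝔥 (exp (θ * I)) (exp (-θ * I)) ∘L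
      (adjoint U ∘L (phaseShift 𝔨 (exp (φ * I)) (exp (-φ * I)) ∘L U)) := hW
  have hUk : 𝔨.orthogonalProjectionOnto (U (x + y)) = A x + B y := by simp [hA, hB]
  have hUk' : 𝔨ᗮ.orthogonalProjectionOnto (U (x + y)) = C x + D y := by simp [hC, hD]
  have hDC : adjoint D (C x) = -adjoint B (A x) := by
    refine eq_neg_of_add_eq_zero_right ?_
    rw [hA, hC, adjoint_apply_add_adjoint_apply_of_isometry hU1 hB hD,
      orthogonalProjectionOnto_orthogonal_apply_eq_zero x.2]
  have hsin := exp_mul_I_sub_exp_neg_mul_I φ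
  refine eq_coe_add_coe_of_orthogonalProjectionOnto_eq ?_ ?_
  · rw [hW', comp_apply, orthogonalProjectionOnto_phaseShift_apply, comp_apply, comp_apply,
      orthogonalProjectionOnto_adjoint_phaseShift_apply hU1 hA hC, hUk,
      orthogonalProjectionOnto_coe_add_coe, hsin, hPpoly, hQpoly, aeval_C_add_C_mul_X_apply,
      smul_apply, comp_apply, comp_apply, aeval_C_apply, comp_apply, map_add]
    module
  · rw [hW', comp_apply, orthogonalProjectionOnto_orthogonal_phaseShift_apply, comp_apply,
      comp_apply, orthogonalProjectionOnto_adjoint_phaseShift_apply' hU1 hB hD, hUk',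
      orthogonalProjectionOnto_orthogonal_coe_add_coe, map_add, hDC, ← neg_sub, hsin, hPpoly,
      hQpoly]
    simp only [Polynomial.map_add, Polynomial.map_mul, Polynomial.map_C, Polynomial.map_X,
      aeval_C_add_C_mul_X_apply, aeval_C_apply, smul_apply, comp_apply, map_mul (starRingEnd ℂ),
      map_ofNat, conj_exp_ofReal_mul_I, conj_exp_neg_ofReal_mul_I, conj_I, conj_ofReal]
    module

open ContinuousLinearMap Complex Submodule Polynomial in
theorem stmt3
    {H : Type*} [NormedAddCommGroup H] [InnerProductSpace ℂ H] [CompleteSpace H]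
    (𝔥 𝔨 : Submodule ℂ H) [CompleteSpace 𝔥] [CompleteSpace 𝔨]
    (U : H →L[ℂ] H) (hU1 : adjoint U ∘L U = 1) (hU2 : U ∘L adjoint U = 1)
    (A : 𝔥 →L[ℂ] 𝔨) (B : 𝔥ᗮ →L[ℂ] 𝔨) (C : 𝔥 →L[ℂ] 𝔨ᗮ) (D : 𝔥ᗮ →L[ℂ] 𝔨ᗮ)
    (hA : ∀ x : 𝔥, A x = orthogonalProjection 𝔨 (U x))
    (hB : ∀ y : 𝔥ᗮ, B y = orthogonalProjection 𝔨 (U y))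
    (hC : ∀ x : 𝔥, C x = orthogonalProjection 𝔨ᗮ (U x))
    (hD : ∀ y : 𝔥ᗮ, D y = orthogonalProjection 𝔨ᗮ (U y))
    (θ φ : ℝ) (W : H →L[ℂ] H)
    (hW : W = (Complex.exp (θ * Complex.I) • (𝔥.subtypeL ∘L orthogonalProjection 𝔥) +
          Complex.exp (-θ * Complex.I) • (1 - 𝔥.subtypeL ∘L orthogonalProjection 𝔥)) ∘L
        (adjoint U ∘L
          ((Complex.exp (φ * Complex.I) • (𝔨.subtypeL ∘L orthogonalProjection 𝔨) +
            Complex.exp (-φ * Complex.I) • (1 - 𝔨.subtypeL ∘L orthogonalProjection 𝔨)) ∘L U)))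
    (Ppoly Qpoly : Polynomial ℂ)
    (hPpoly : Ppoly = Polynomial.C (Complex.exp (θ * Complex.I) * Complex.exp (-φ * Complex.I)) +
      Polynomial.C (Complex.exp (θ * Complex.I) * (2 * Complex.I * Real.sin φ)) * Polynomial.X)
    (hQpoly : Qpoly = Polynomial.C (2 * Complex.exp (θ * Complex.I) * Real.sin φ)) :
    ∀ x : 𝔥, ∀ y : 𝔥ᗮ,
      W ((x : H) + (y : H)) =
        ((Polynomial.aeval (adjoint A ∘L A) Ppoly x +
          (Complex.I • (Polynomial.aeval (adjoint A ∘L A) Qpoly ∘L (adjoint A ∘L B))) y : 𝔥) : H) +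
        (((Complex.I • (Polynomial.aeval (adjoint D ∘L D) (Qpoly.map (starRingEnd ℂ)) ∘L
            (adjoint B ∘L A))) x +
          Polynomial.aeval (adjoint D ∘L D) (Ppoly.map (starRingEnd ℂ)) y : 𝔥ᗮ) : H) :=
  stmt3_general 𝔥 𝔨 U hU1 A B C D hA hB hC hD θ φ W hW Ppoly Qpoly hPpoly hQpoly
end

section
/- Let A : 𝔥 → 𝔨 and B : 𝔥^⊥ → 𝔨 be block entries of a unitary U = [[A,B],[C,D]], so that AA* + BB* = I_𝔨 and B*B + D*D = I_{𝔥^⊥}. Then for any polynomial Φ with complex coefficients, A* B Φ(D*D) B* A = Φ(A*A)(I − A*A) A*A as operators on 𝔥. -/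
/-!
The block entries of `U` are the compressions `A = P_𝔨 U ι_𝔥`, `B = P_𝔨 U ι_𝔥ᗮ`,
`D = P_𝔨ᗮ U ι_𝔥ᗮ`, so `UU* = 1` and `U*U = 1` give
`AA* + BB* = 1` and `B*B + D*D = 1`. Hence `(D*D) B* = B* (AA*)`, which intertwines
`Φ(D*D) B* = B* Φ(AA*)`; together with `Φ(AA*) A = A Φ(A*A)` the left-hand side becomes
`A* (1 - AA*) A Φ(A*A) = (1 - A*A) A*A Φ(A*A)`, and `Φ(A*A)` commutes with `(1 - A*A) A*A`.
-/

namespace ContinuousLinearMap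

open Polynomial

variable {𝕜 E F G : Type*} [NormedField 𝕜] [NormedAddCommGroup E] [NormedSpace 𝕜 E]
  [NormedAddCommGroup F] [NormedSpace 𝕜 F] [NormedAddCommGroup G] [NormedSpace 𝕜 G]

theorem aeval_comp_eq_comp_aeval {T : E →L[𝕜] E} {T' : F →L[𝕜] F} {S : F →L[𝕜] E}
    (h : T ∘L S = S ∘L T') (Φ : 𝕜[X]) : aeval T Φ ∘L S = S ∘L aeval T' Φ := by
  induction Φ using Polynomial.induction_on with
  | C a => ext; simp
  | add p q hp hq => simp only [map_add, add_comp, comp_add, hp, hq]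
  | monomial n a ih =>
    rw [pow_succ, ← mul_assoc, map_mul (aeval T), map_mul (aeval T'), aeval_X, aeval_X, mul_def,
      mul_def, comp_assoc, h, ← comp_assoc, ih, comp_assoc]

theorem comp_aeval_comp_eq_of_add_eq_one (A : E →L[𝕜] F) (A' : F →L[𝕜] E) (B : G →L[𝕜] F)
    (B' : F →L[𝕜] G) (P : G →L[𝕜] G) (hA : A ∘L A' + B ∘L B' = 1) (hB : B' ∘L B + P = 1)
    (Φ : 𝕜[X]) :
    (A' ∘L B) ∘L (aeval P Φ ∘L (B' ∘L A)) =
      aeval (A' ∘L A) Φ ∘L ((1 - A' ∘L A) ∘L (A' ∘L A)) := by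
  have hBB' : B ∘L B' = 1 - A ∘L A' := eq_sub_of_add_eq' hA
  have hP : P ∘L B' = B' ∘L (A ∘L A') := by
    rw [eq_sub_of_add_eq' hB, sub_comp, comp_assoc, hBB', comp_sub]
    simp only [one_def, id_comp, comp_id, sub_sub_cancel]
  have hAA' : aeval (A ∘L A') Φ ∘L A = A ∘L aeval (A' ∘L A) Φ :=
    aeval_comp_eq_comp_aeval (comp_assoc _ _ _) Φ
  set T := A' ∘L A
  have hcomm : Commute (aeval T Φ) ((1 - T) * T) := by
    have := (Commute.all Φ ((1 - X) * X)).map (aeval T)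
    rwa [map_mul, map_sub, map_one, aeval_X] at this
  calc (A' ∘L B) ∘L (aeval P Φ ∘L (B' ∘L A))
      = A' ∘L (B ∘L B') ∘L aeval (A ∘L A') Φ ∘L A := by
        rw [← comp_assoc (aeval P Φ), aeval_comp_eq_comp_aeval hP]; simp only [comp_assoc]
    _ = ((1 - T) * T) * aeval T Φ := by
        rw [hAA', hBB']; simp only [T, mul_def, comp_sub, sub_comp, comp_assoc, one_def, id_comp]
    _ = aeval T Φ ∘L ((1 - T) ∘L T) := hcomm.eq.symm

end ContinuousLinearMap

namespace Submodule

open ContinuousLinearMap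

variable {𝕜 E : Type*} [RCLike 𝕜] [NormedAddCommGroup E] [InnerProductSpace 𝕜 E]

noncomputable def blockEntry (K L : Submodule 𝕜 E) [L.HasOrthogonalProjection] (X : E →L[𝕜] E) :
    K →L[𝕜] L :=
  L.orthogonalProjectionOnto ∘L X ∘L K.subtypeL

theorem blockEntry_one (K : Submodule 𝕜 E) [K.HasOrthogonalProjection] :
    K.blockEntry K 1 = 1 := by
  ext x
  simp [blockEntry, orthogonalProjectionOnto_mem_subspace_eq_self]

theorem adjoint_blockEntry [CompleteSpace E] (K L : Submodule 𝕜 E) [CompleteSpace K]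
    [CompleteSpace L] (X : E →L[𝕜] E) :
    adjoint (K.blockEntry L X) = L.blockEntry K (adjoint X) := by
  simp only [blockEntry, adjoint_comp, adjoint_subtypeL, adjoint_orthogonalProjectionOnto,
    comp_assoc]

theorem blockEntry_comp_add_blockEntry_orthogonal_comp (K L M : Submodule 𝕜 E)
    [K.HasOrthogonalProjection] [L.HasOrthogonalProjection] (X Y : E →L[𝕜] E) :
    K.blockEntry L X ∘L M.blockEntry K Y + Kᗮ.blockEntry L X ∘L M.blockEntry Kᗮ Y =
      M.blockEntry L (X ∘L Y) := by
  have hsum : K.subtypeL ∘L K.orthogonalProjectionOnto +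
      Kᗮ.subtypeL ∘L Kᗮ.orthogonalProjectionOnto = 1 :=
    K.id_eq_sum_starProjection_self_orthogonalComplement.symm
  calc _ = L.orthogonalProjectionOnto ∘L X ∘L (K.subtypeL ∘L K.orthogonalProjectionOnto +
          Kᗮ.subtypeL ∘L Kᗮ.orthogonalProjectionOnto) ∘L Y ∘L M.subtypeL := by
        simp only [blockEntry, add_comp, comp_add, comp_assoc]
    _ = M.blockEntry L (X ∘L Y) := by rw [hsum, one_def, id_comp]; rfl

end Submodule

open ContinuousLinearMap Complex Submodule Polynomial in
theorem stmt4_general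
    {H : Type*} [NormedAddCommGroup H] [InnerProductSpace ℂ H] [CompleteSpace H]
    (𝔥 𝔨 : Submodule ℂ H) [CompleteSpace 𝔥] [CompleteSpace 𝔨]
    (U : H →L[ℂ] H) (hU1 : adjoint U ∘L U = 1) (hU2 : U ∘L adjoint U = 1)
    (A : 𝔥 →L[ℂ] 𝔨) (B : 𝔥ᗮ →L[ℂ] 𝔨) (D : 𝔥ᗮ →L[ℂ] 𝔨ᗮ)
    (hA : ∀ x : 𝔥, A x = orthogonalProjection 𝔨 (U x))
    (hB : ∀ y : 𝔥ᗮ, B y = orthogonalProjection 𝔨 (U y))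
    (hD : ∀ y : 𝔥ᗮ, D y = orthogonalProjection 𝔨ᗮ (U y))
    (Φ : Polynomial ℂ) :
    (adjoint A ∘L B) ∘L (Polynomial.aeval (adjoint D ∘L D) Φ ∘L (adjoint B ∘L A)) =
      Polynomial.aeval (adjoint A ∘L A) Φ ∘L ((1 - adjoint A ∘L A) ∘L (adjoint A ∘L A)) := by
  obtain rfl : A = 𝔥.blockEntry 𝔨 U := ext hA
  obtain rfl : B = 𝔥ᗮ.blockEntry 𝔨 U := ext hB
  obtain rfl : D = 𝔥ᗮ.blockEntry 𝔨ᗮ U := ext hD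
  refine comp_aeval_comp_eq_of_add_eq_one _ _ _ _ _ ?_ ?_ Φ
  · rw [adjoint_blockEntry, adjoint_blockEntry, blockEntry_comp_add_blockEntry_orthogonal_comp,
      hU2, blockEntry_one]
  · rw [adjoint_blockEntry, adjoint_blockEntry, blockEntry_comp_add_blockEntry_orthogonal_comp,
      hU1, blockEntry_one]

open ContinuousLinearMap Complex Submodule Polynomial in
theorem stmt4
    {H : Type*} [NormedAddCommGroup H] [InnerProductSpace ℂ H] [CompleteSpace H]
    (𝔥 𝔨 : Submodule ℂ H) [CompleteSpace 𝔥] [CompleteSpace 𝔨]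
    (U : H →L[ℂ] H) (hU1 : adjoint U ∘L U = 1) (hU2 : U ∘L adjoint U = 1)
    (A : 𝔥 →L[ℂ] 𝔨) (B : 𝔥ᗮ →L[ℂ] 𝔨) (C : 𝔥 →L[ℂ] 𝔨ᗮ) (D : 𝔥ᗮ →L[ℂ] 𝔨ᗮ)
    (hA : ∀ x : 𝔥, A x = orthogonalProjection 𝔨 (U x))
    (hB : ∀ y : 𝔥ᗮ, B y = orthogonalProjection 𝔨 (U y))
    (hC : ∀ x : 𝔥, C x = orthogonalProjection 𝔨ᗮ (U x))
    (hD : ∀ y : 𝔥ᗮ, D y = orthogonalProjection 𝔨ᗮ (U y))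
    (Φ : Polynomial ℂ) :
    (adjoint A ∘L B) ∘L (Polynomial.aeval (adjoint D ∘L D) Φ ∘L (adjoint B ∘L A)) =
      Polynomial.aeval (adjoint A ∘L A) Φ ∘L ((1 - adjoint A ∘L A) ∘L (adjoint A ∘L A)) :=
  stmt4_general 𝔥 𝔨 U hU1 hU2 A B D hA hB hD Φ
end

section
/- Let A : 𝔥 → 𝔨, B : 𝔥^⊥ → 𝔨, D : 𝔥^⊥ → 𝔨^⊥ be block entries of a unitary U = [[A,B],[C,D]]. Then for any polynomial Φ with complex coefficients, B* A Φ(A*A) A* B = Φ(D*D)(I − D*D) D*D as operators on 𝔥^⊥. -/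
/-! Write `A, B, C, D` as the compressions `P_𝔨 U ι_𝔥, …` of `U`. Inserting `1 = P_𝔨 + P_𝔨ᗮ`
between `U*` and `U`, and `1 = P_𝔥 + P_𝔥ᗮ` between `U` and `U*`, turns unitarity into the block
relations `A*B + C*D = 0`, `AC* + BD* = 0` and `CC* + DD* = 1`. By the first two,
`A*A · A*B = -A*(AC*)D = A*B · D*D`, so `A*B` intertwines `D*D` with `A*A` and hence
`Φ(A*A) A*B = A*B Φ(D*D)`; by the first and third, `B*A · A*B = D*(CC*)D = (1 - D*D) D*D`. -/

open ContinuousLinearMap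
open scoped Polynomial

section Intertwining

variable {𝕜 E F : Type*} [NontriviallyNormedField 𝕜] [NormedAddCommGroup E] [NormedSpace 𝕜 E]
  [NormedAddCommGroup F] [NormedSpace 𝕜 F]

theorem ContinuousLinearMap.pow_comp_of_comp_eq {S : E →L[𝕜] E} {R : F →L[𝕜] F}
    {T : F →L[𝕜] E} (h : S ∘L T = T ∘L R) (n : ℕ) : (S ^ n) ∘L T = T ∘L (R ^ n) := by
  induction n with
  | zero => rfl
  | succ n ih =>
    rw [pow_succ, pow_succ, mul_def, mul_def, comp_assoc, h, ← comp_assoc, ih, comp_assoc]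

theorem ContinuousLinearMap.aeval_comp_of_comp_eq {S : E →L[𝕜] E} {R : F →L[𝕜] F}
    {T : F →L[𝕜] E} (h : S ∘L T = T ∘L R) (p : 𝕜[X]) :
    Polynomial.aeval S p ∘L T = T ∘L Polynomial.aeval R p := by
  induction p using Polynomial.induction_on' with
  | add p q hp hq => rw [map_add, map_add, add_comp, comp_add, hp, hq]
  | monomial n a =>
    rw [Polynomial.aeval_monomial, Polynomial.aeval_monomial, ← Algebra.smul_def,
      ← Algebra.smul_def, smul_comp, comp_smul, pow_comp_of_comp_eq h]

theorem ContinuousLinearMap.one_sub_comp_self_comp_aeval_comm (R : E →L[𝕜] E) (p : 𝕜[X]) :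
    ((1 - R) ∘L R) ∘L Polynomial.aeval R p = Polynomial.aeval R p ∘L ((1 - R) ∘L R) := by
  have h : (1 - R) ∘L R = Polynomial.aeval R ((1 - Polynomial.X : 𝕜[X]) * Polynomial.X) := by
    rw [map_mul, map_sub, map_one, Polynomial.aeval_X, mul_def]
  rw [h, ← mul_def, ← mul_def, ← map_mul, ← map_mul, mul_comm]

end Intertwining

section Blocks

variable {𝕜 E₁ E₂ F₁ F₂ : Type*} [RCLike 𝕜]
  [NormedAddCommGroup E₁] [InnerProductSpace 𝕜 E₁] [CompleteSpace E₁]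
  [NormedAddCommGroup E₂] [InnerProductSpace 𝕜 E₂] [CompleteSpace E₂]
  [NormedAddCommGroup F₁] [InnerProductSpace 𝕜 F₁] [CompleteSpace F₁]
  [NormedAddCommGroup F₂] [InnerProductSpace 𝕜 F₂] [CompleteSpace F₂]
  {A : E₁ →L[𝕜] F₁} {B : E₂ →L[𝕜] F₁} {C : E₁ →L[𝕜] F₂} {D : E₂ →L[𝕜] F₂}

theorem adjoint_comp_self_comp_eq_of_blocks (h₁ : adjoint A ∘L B + adjoint C ∘L D = 0)
    (h₂ : A ∘L adjoint C + B ∘L adjoint D = 0) :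
    (adjoint A ∘L A) ∘L (adjoint A ∘L B) = (adjoint A ∘L B) ∘L (adjoint D ∘L D) := by
  have e₁ : adjoint A ∘L B = -(adjoint C ∘L D) := eq_neg_of_add_eq_zero_left h₁
  have e₂ : A ∘L adjoint C = -(B ∘L adjoint D) := eq_neg_of_add_eq_zero_left h₂
  calc (adjoint A ∘L A) ∘L (adjoint A ∘L B)
      = -(adjoint A ∘L (A ∘L adjoint C) ∘L D) := by
        simp only [e₁, comp_neg, comp_assoc]
    _ = (adjoint A ∘L B) ∘L (adjoint D ∘L D) := by
        simp only [e₂, neg_comp, comp_neg, neg_neg, comp_assoc]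

theorem adjoint_comp_comp_adjoint_comp_eq_of_blocks (h₁ : adjoint A ∘L B + adjoint C ∘L D = 0)
    (h₃ : C ∘L adjoint C + D ∘L adjoint D = 1) :
    (adjoint B ∘L A) ∘L (adjoint A ∘L B) = (1 - adjoint D ∘L D) ∘L (adjoint D ∘L D) := by
  have e₁ : adjoint A ∘L B = -(adjoint C ∘L D) := eq_neg_of_add_eq_zero_left h₁
  have e₂ : adjoint B ∘L A = -(adjoint D ∘L C) := by
    rw [← adjoint_adjoint A, ← adjoint_comp, e₁, map_neg, adjoint_comp, adjoint_adjoint]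
  have e₃ : C ∘L adjoint C = 1 - D ∘L adjoint D := eq_sub_of_add_eq h₃
  calc (adjoint B ∘L A) ∘L (adjoint A ∘L B)
      = adjoint D ∘L (C ∘L adjoint C) ∘L D := by
        simp only [e₁, e₂, neg_comp, comp_neg, neg_neg, comp_assoc]
    _ = (1 - adjoint D ∘L D) ∘L (adjoint D ∘L D) := by
        simp only [e₃, sub_comp, comp_sub, one_def, id_comp, comp_assoc]

theorem adjoint_comp_comp_aeval_comp_eq_of_blocks (h₁ : adjoint A ∘L B + adjoint C ∘L D = 0)
    (h₂ : A ∘L adjoint C + B ∘L adjoint D = 0) (h₃ : C ∘L adjoint C + D ∘L adjoint D = 1)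
    (p : 𝕜[X]) :
    (adjoint B ∘L A) ∘L (Polynomial.aeval (adjoint A ∘L A) p ∘L (adjoint A ∘L B)) =
      Polynomial.aeval (adjoint D ∘L D) p ∘L ((1 - adjoint D ∘L D) ∘L (adjoint D ∘L D)) := by
  rw [aeval_comp_of_comp_eq (adjoint_comp_self_comp_eq_of_blocks h₁ h₂), ← comp_assoc,
    adjoint_comp_comp_adjoint_comp_eq_of_blocks h₁ h₃, one_sub_comp_self_comp_aeval_comm]

end Blocks

namespace Submodule

variable {𝕜 H : Type*} [RCLike 𝕜] [NormedAddCommGroup H] [InnerProductSpace 𝕜 H]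

noncomputable def compression (L : Submodule 𝕜 H) [L.HasOrthogonalProjection] (V : H →L[𝕜] H)
    (K : Submodule 𝕜 H) : K →L[𝕜] L :=
  L.orthogonalProjectionOnto ∘L V ∘L K.subtypeL

variable {K L M : Submodule 𝕜 H}

theorem compression_comp_add_compression_orthogonal_comp [K.HasOrthogonalProjection]
    [L.HasOrthogonalProjection] (V W : H →L[𝕜] H) :
    L.compression V K ∘L K.compression W M + L.compression V Kᗮ ∘L Kᗮ.compression W M =
      L.compression (V ∘L W) M := by
  ext y
  simp only [compression, add_apply, comp_apply, subtypeL_apply, ← map_add]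
  rw [← starProjection_apply K, ← starProjection_apply Kᗮ,
    starProjection_add_starProjection_orthogonal]

theorem adjoint_compression [CompleteSpace H] [CompleteSpace K] [CompleteSpace L]
    (V : H →L[𝕜] H) : adjoint (L.compression V K) = K.compression (adjoint V) L := by
  simp only [compression, adjoint_comp, adjoint_subtypeL, adjoint_orthogonalProjectionOnto,
    comp_assoc]

theorem compression_one_self [L.HasOrthogonalProjection] : L.compression 1 L = 1 := by
  ext y
  simp [compression]

theorem IsOrtho.compression_one [L.HasOrthogonalProjection] (h : L ⟂ M) :
    L.compression 1 M = 0 := by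
  rw [compression, one_def, id_comp, h.orthogonalProjectionOnto_comp_subtypeL]

end Submodule

open ContinuousLinearMap Complex Submodule Polynomial in
theorem stmt5
    {H : Type*} [NormedAddCommGroup H] [InnerProductSpace ℂ H] [CompleteSpace H]
    (𝔥 𝔨 : Submodule ℂ H) [CompleteSpace 𝔥] [CompleteSpace 𝔨]
    (U : H →L[ℂ] H) (hU1 : adjoint U ∘L U = 1) (hU2 : U ∘L adjoint U = 1)
    (A : 𝔥 →L[ℂ] 𝔨) (B : 𝔥ᗮ →L[ℂ] 𝔨) (C : 𝔥 →L[ℂ] 𝔨ᗮ) (D : 𝔥ᗮ →L[ℂ] 𝔨ᗮ)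
    (hA : ∀ x : 𝔥, A x = orthogonalProjection 𝔨 (U x))
    (hB : ∀ y : 𝔥ᗮ, B y = orthogonalProjection 𝔨 (U y))
    (hC : ∀ x : 𝔥, C x = orthogonalProjection 𝔨ᗮ (U x))
    (hD : ∀ y : 𝔥ᗮ, D y = orthogonalProjection 𝔨ᗮ (U y))
    (Φ : Polynomial ℂ) :
    (adjoint B ∘L A) ∘L (Polynomial.aeval (adjoint A ∘L A) Φ ∘L (adjoint A ∘L B)) =
      Polynomial.aeval (adjoint D ∘L D) Φ ∘L ((1 - adjoint D ∘L D) ∘L (adjoint D ∘L D)) := by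
  obtain rfl : A = 𝔨.compression U 𝔥 := ContinuousLinearMap.ext hA
  obtain rfl : B = 𝔨.compression U 𝔥ᗮ := ContinuousLinearMap.ext hB
  obtain rfl : C = 𝔨ᗮ.compression U 𝔥 := ContinuousLinearMap.ext hC
  obtain rfl : D = 𝔨ᗮ.compression U 𝔥ᗮ := ContinuousLinearMap.ext hD
  refine adjoint_comp_comp_aeval_comp_eq_of_blocks (C := 𝔨ᗮ.compression U 𝔥) ?_ ?_ ?_ Φ
  · rw [adjoint_compression, adjoint_compression,
      compression_comp_add_compression_orthogonal_comp, hU1,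
      (isOrtho_orthogonal_right 𝔥).compression_one]
  · rw [adjoint_compression, adjoint_compression,
      compression_comp_add_compression_orthogonal_comp, hU2,
      (isOrtho_orthogonal_right 𝔨).compression_one]
  · rw [adjoint_compression, adjoint_compression,
      compression_comp_add_compression_orthogonal_comp, hU2, compression_one_self]
end

section
/- With the even-iteration representation ∏_{k=1}^n W_k = [[Π_n(A*A), iΦ_n(A*A)A*B],[iΦ̄_n(D*D)B*A, Π̄_n(D*D)]], define for a further parameter φ_{n+1}: Θ_n(x) := e^{iφ_{n+1}}(Π_n(x) + iΦ̄_n(x)(1−x)) and Ω_n(x) := e^{iφ_{n+1}}(Π̄_n(x) + iΦ_n(x)x). Then the odd iteration satisfies R_𝔨(φ_{n+1}) U ∏_{k=1}^n W_k = [[Θ_n(AA*) A, Ω_n(AA*) B],[Ω̄_n(DD*) C, Θ̄_n(DD*) D]] from 𝔥 ⊕ 𝔥^⊥ to 𝔨 ⊕ 𝔨^⊥. -/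
/-!
Write `v = h + h'` with `h ∈ 𝔥`, `h' ∈ 𝔥ᗮ`; then `U v = (A h + B h') + (C h + D h')` in
`𝔨 ⊕ 𝔨ᗮ`, and `R_𝔨(φ)` multiplies the two components by `e^{±iφ}`. Unitarity of
`[[A, B], [C, D]]` gives the intertwinings `B p(D*D) = p(AA*) B` and `C p(A*A) = p(DD*) C`, and
`BB* = 1 - AA*`, `CC* = 1 - DD*`, `A*B = -C*D`, `DB* = -CA*`. These move every polynomial onto
`AA*` (resp. `DD*`), where the leftover factors `BB*` and `AA*` become the `1 - x` and `x` of
`Θ_n` and `Ω_n`.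
-/
open ContinuousLinearMap (adjoint adjoint_comp comp_apply)
open Polynomial

section PolynomialCalculus

variable {𝕜 E F : Type*} [NontriviallyNormedField 𝕜] [NormedAddCommGroup E] [NormedSpace 𝕜 E]
  [NormedAddCommGroup F] [NormedSpace 𝕜 F]

theorem ContinuousLinearMap.comp_aeval_of_comp_eq {T : E →L[𝕜] F} {S : E →L[𝕜] E}
    {S' : F →L[𝕜] F} (h : T ∘L S = S' ∘L T) (p : 𝕜[X]) :
    T ∘L aeval S p = aeval S' p ∘L T := by
  induction p using Polynomial.induction_on with
  | C a => ext v; simp [Algebra.algebraMap_eq_smul_one]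
  | add p q hp hq => simp only [map_add, comp_add, add_comp, hp, hq]
  | monomial k a ih =>
    rw [pow_succ, ← mul_assoc, map_mul (aeval S), map_mul (aeval S'), aeval_X, aeval_X, mul_def,
      mul_def, ← ContinuousLinearMap.comp_assoc, ih, ContinuousLinearMap.comp_assoc, h,
      ContinuousLinearMap.comp_assoc]

theorem ContinuousLinearMap.apply_aeval_of_comp_eq {T : E →L[𝕜] F} {S : E →L[𝕜] E}
    {S' : F →L[𝕜] F} (h : T ∘L S = S' ∘L T) (p : 𝕜[X]) (v : E) :
    T (aeval S p v) = aeval S' p (T v) :=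
  DFunLike.congr_fun (comp_aeval_of_comp_eq h p) v

theorem Polynomial.aeval_C_mul_apply (S : E →L[𝕜] E) (c : 𝕜) (p : 𝕜[X]) (v : E) :
    aeval S (C c * p) v = c • aeval S p v := by
  simp [Algebra.algebraMap_eq_smul_one]

end PolynomialCalculus

section BlockEntry

variable {𝕜 H : Type*} [RCLike 𝕜] [NormedAddCommGroup H] [InnerProductSpace 𝕜 H]

/-- The compression `P_L U|_K`; for `K ∈ {𝔥, 𝔥ᗮ}`, `L ∈ {𝔨, 𝔨ᗮ}` these are the blocks
`A, B, C, D` of `U`. -/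
noncomputable def blockEntry (U : H →L[𝕜] H) (K L : Submodule 𝕜 H) [L.HasOrthogonalProjection] :
    K →L[𝕜] L :=
  L.orthogonalProjectionOnto ∘L U ∘L K.subtypeL

@[simp]
theorem blockEntry_apply (U : H →L[𝕜] H) (K L : Submodule 𝕜 H) [L.HasOrthogonalProjection]
    (v : K) : blockEntry U K L v = L.orthogonalProjectionOnto (U v) :=
  rfl

theorem apply_add_eq_blockEntry (U : H →L[𝕜] H) (K L : Submodule 𝕜 H)
    [L.HasOrthogonalProjection] (u : K) (u' : Kᗮ) :
    U (u + u') = ((blockEntry U K L u + blockEntry U Kᗮ L u' : L) : H) +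
      ((blockEntry U K Lᗮ u + blockEntry U Kᗮ Lᗮ u' : Lᗮ) : H) := by
  simp only [blockEntry_apply, ← map_add]
  exact (L.starProjection_add_starProjection_orthogonal _).symm

theorem blockEntry_comp_add_blockEntry_comp (V U : H →L[𝕜] H) (K L M : Submodule 𝕜 H)
    [L.HasOrthogonalProjection] [M.HasOrthogonalProjection] :
    blockEntry V L M ∘L blockEntry U K L + blockEntry V Lᗮ M ∘L blockEntry U K Lᗮ =
      blockEntry (V ∘L U) K M := by
  ext v
  simp only [add_apply, comp_apply, blockEntry_apply, ← map_add,
    ← Submodule.starProjection_apply, L.starProjection_add_starProjection_orthogonal]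

@[simp]
theorem blockEntry_one_self (K : Submodule 𝕜 H) [K.HasOrthogonalProjection] :
    blockEntry 1 K K = 1 := by
  ext v
  simp

theorem blockEntry_one_eq_zero_of_le_orthogonal {K L : Submodule 𝕜 H}
    [L.HasOrthogonalProjection] (h : K ≤ Lᗮ) : blockEntry 1 K L = 0 := by
  ext v
  simp [L.orthogonalProjectionOnto_apply_of_mem_orthogonal (h v.2)]

theorem Submodule.smul_projection_add_smul_one_sub_projection_apply (L : Submodule 𝕜 H)
    [L.HasOrthogonalProjection] (c c' : 𝕜) (u : L) (u' : Lᗮ) :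
    (c • (L.subtypeL ∘L L.orthogonalProjectionOnto) +
        c' • (1 - L.subtypeL ∘L L.orthogonalProjectionOnto)) ((u : H) + (u' : H)) =
      ((c • u : L) : H) + ((c' • u' : Lᗮ) : H) := by
  simp [L.orthogonalProjectionOnto_apply_of_mem_orthogonal u'.2]

variable [CompleteSpace H]

theorem adjoint_blockEntry (U : H →L[𝕜] H) (K L : Submodule 𝕜 H) [CompleteSpace K]
    [CompleteSpace L] : adjoint (blockEntry U K L) = blockEntry (adjoint U) L K := by
  simp only [blockEntry, adjoint_comp, K.adjoint_subtypeL, L.adjoint_orthogonalProjectionOnto,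
    ContinuousLinearMap.comp_assoc]

theorem adjoint_blockEntry_comp_add_of_isometry {V : H →L[𝕜] H} (hV : adjoint V ∘L V = 1)
    (K K' L : Submodule 𝕜 H) [CompleteSpace K] [CompleteSpace K'] [CompleteSpace L] :
    adjoint (blockEntry V K L) ∘L blockEntry V K' L +
      adjoint (blockEntry V K Lᗮ) ∘L blockEntry V K' Lᗮ = blockEntry 1 K' K := by
  rw [adjoint_blockEntry, adjoint_blockEntry, blockEntry_comp_add_blockEntry_comp, hV]

end BlockEntry

section UnitaryBlock

variable {𝕜 E₁ E₂ F₁ F₂ : Type*} [RCLike 𝕜]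
  [NormedAddCommGroup E₁] [InnerProductSpace 𝕜 E₁] [CompleteSpace E₁]
  [NormedAddCommGroup E₂] [InnerProductSpace 𝕜 E₂] [CompleteSpace E₂]
  [NormedAddCommGroup F₁] [InnerProductSpace 𝕜 F₁] [CompleteSpace F₁]
  [NormedAddCommGroup F₂] [InnerProductSpace 𝕜 F₂] [CompleteSpace F₂]

/-- `W = [[A, B], [C, D]] : E₁ ⊕ E₂ → F₁ ⊕ F₂` is unitary: the `col` fields are `W*W = 1`,
the `row` fields are `WW* = 1`. -/
structure IsUnitaryBlock (A : E₁ →L[𝕜] F₁) (B : E₂ →L[𝕜] F₁) (C : E₁ →L[𝕜] F₂)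
    (D : E₂ →L[𝕜] F₂) : Prop where
  col₁ : adjoint A ∘L A + adjoint C ∘L C = 1
  col₂ : adjoint B ∘L B + adjoint D ∘L D = 1
  col₁₂ : adjoint A ∘L B + adjoint C ∘L D = 0
  row₁ : A ∘L adjoint A + B ∘L adjoint B = 1
  row₂ : C ∘L adjoint C + D ∘L adjoint D = 1
  row₁₂ : A ∘L adjoint C + B ∘L adjoint D = 0

namespace IsUnitaryBlock

variable {A : E₁ →L[𝕜] F₁} {B : E₂ →L[𝕜] F₁} {C : E₁ →L[𝕜] F₂} {D : E₂ →L[𝕜] F₂}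

theorem comp_adjoint_comp_right (hU : IsUnitaryBlock A B C D) :
    B ∘L (adjoint D ∘L D) = (A ∘L adjoint A) ∘L B := by
  rw [eq_sub_of_add_eq' hU.col₂, eq_sub_of_add_eq hU.row₁]
  ext v
  simp

theorem comp_adjoint_comp_left (hU : IsUnitaryBlock A B C D) :
    C ∘L (adjoint A ∘L A) = (D ∘L adjoint D) ∘L C := by
  rw [eq_sub_of_add_eq hU.col₁, eq_sub_of_add_eq' hU.row₂]
  ext v
  simp

theorem top_row_aeval (hU : IsUnitaryBlock A B C D) (P P' Q Q' : 𝕜[X]) (x : E₁) (y : E₂) :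
    A (aeval (adjoint A ∘L A) P x + aeval (adjoint A ∘L A) Q (adjoint A (B y))) +
        B (aeval (adjoint D ∘L D) Q' (adjoint B (A x)) + aeval (adjoint D ∘L D) P' y) =
      aeval (A ∘L adjoint A) (P + Q' * (1 - X)) (A x) +
        aeval (A ∘L adjoint A) (P' + Q * X) (B y) := by
  have hA := ContinuousLinearMap.apply_aeval_of_comp_eq
    (ContinuousLinearMap.comp_assoc A (adjoint A) A).symm
  have hB := ContinuousLinearMap.apply_aeval_of_comp_eq hU.comp_adjoint_comp_right
  have hBB : B (adjoint B (A x)) = (1 - A ∘L adjoint A) (A x) := by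
    rw [← eq_sub_of_add_eq' hU.row₁]; rfl
  simp only [map_add, map_sub, map_one, map_mul, aeval_X, add_apply, mul_apply_eq_comp, hA, hB,
    hBB]
  rw [comp_apply]
  abel

theorem bottom_row_aeval (hU : IsUnitaryBlock A B C D) (P P' Q Q' : 𝕜[X]) (x : E₁) (y : E₂) :
    C (aeval (adjoint A ∘L A) P x + aeval (adjoint A ∘L A) Q (adjoint A (B y))) +
        D (aeval (adjoint D ∘L D) Q' (adjoint B (A x)) + aeval (adjoint D ∘L D) P' y) =
      aeval (D ∘L adjoint D) (P - Q' * X) (C x) +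
        aeval (D ∘L adjoint D) (P' - Q * (1 - X)) (D y) := by
  have hC := ContinuousLinearMap.apply_aeval_of_comp_eq hU.comp_adjoint_comp_left
  have hD := ContinuousLinearMap.apply_aeval_of_comp_eq
    (ContinuousLinearMap.comp_assoc D (adjoint D) D).symm
  have hCAB : C (adjoint A (B y)) = -(1 - D ∘L adjoint D) (D y) := by
    have h : adjoint A (B y) + adjoint C (D y) = 0 := DFunLike.congr_fun hU.col₁₂ y
    rw [eq_neg_of_add_eq_zero_left h, map_neg, ← eq_sub_of_add_eq hU.row₂]
    rfl
  have hDBA : D (adjoint B (A x)) = -(D ∘L adjoint D) (C x) := by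
    have h : C ∘L adjoint A + D ∘L adjoint B = 0 := by
      simpa [adjoint_comp] using congrArg adjoint hU.row₁₂
    have h' : C (adjoint A (A x)) + D (adjoint B (A x)) = 0 := DFunLike.congr_fun h (A x)
    rw [eq_neg_of_add_eq_zero_right h', ← comp_apply, ← comp_apply, ← comp_apply,
      ← hU.comp_adjoint_comp_left]
    rfl
  simp only [map_add, map_sub, map_one, map_mul, aeval_X, sub_apply, mul_apply_eq_comp, hC, hD,
    hCAB, hDBA, map_neg]
  abel

end IsUnitaryBlock

end UnitaryBlock

section UnitaryBlockEntries

variable {𝕜 H : Type*} [RCLike 𝕜] [NormedAddCommGroup H] [InnerProductSpace 𝕜 H] [CompleteSpace H]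

theorem isUnitaryBlock_blockEntry {U : H →L[𝕜] H} (hU₁ : adjoint U ∘L U = 1)
    (hU₂ : U ∘L adjoint U = 1) (K L : Submodule 𝕜 H) [CompleteSpace K] [CompleteSpace L] :
    IsUnitaryBlock (blockEntry U K L) (blockEntry U Kᗮ L) (blockEntry U K Lᗮ)
      (blockEntry U Kᗮ Lᗮ) := by
  have hU₂' : adjoint (adjoint U) ∘L adjoint U = 1 := by rwa [ContinuousLinearMap.adjoint_adjoint]
  have hK : blockEntry 1 Kᗮ K = 0 := blockEntry_one_eq_zero_of_le_orthogonal le_rfl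
  have hL : blockEntry 1 Lᗮ L = 0 := blockEntry_one_eq_zero_of_le_orthogonal le_rfl
  refine ⟨?_, ?_, ?_, ?_, ?_, ?_⟩
  · simpa using adjoint_blockEntry_comp_add_of_isometry hU₁ K K L
  · simpa using adjoint_blockEntry_comp_add_of_isometry hU₁ Kᗮ Kᗮ L
  · simpa [hK] using adjoint_blockEntry_comp_add_of_isometry hU₁ K Kᗮ L
  -- the rows of `U` are the adjoints of the columns of `U*`
  · simpa [adjoint_blockEntry] using adjoint_blockEntry_comp_add_of_isometry hU₂' L L K
  · simpa [adjoint_blockEntry] using adjoint_blockEntry_comp_add_of_isometry hU₂' Lᗮ Lᗮ K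
  · simpa [adjoint_blockEntry, hL] using adjoint_blockEntry_comp_add_of_isometry hU₂' L Lᗮ K

end UnitaryBlockEntries

open ContinuousLinearMap Complex Submodule Polynomial in
theorem stmt8_general
    {H : Type*} [NormedAddCommGroup H] [InnerProductSpace ℂ H] [CompleteSpace H]
    (𝔥 𝔨 : Submodule ℂ H) [CompleteSpace 𝔥] [CompleteSpace 𝔨]
    (U : H →L[ℂ] H) (hU1 : adjoint U ∘L U = 1) (hU2 : U ∘L adjoint U = 1)
    (A : 𝔥 →L[ℂ] 𝔨) (B : 𝔥ᗮ →L[ℂ] 𝔨) (C : 𝔥 →L[ℂ] 𝔨ᗮ) (D : 𝔥ᗮ →L[ℂ] 𝔨ᗮ)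
    (hA : ∀ x : 𝔥, A x = orthogonalProjection 𝔨 (U x))
    (hB : ∀ y : 𝔥ᗮ, B y = orthogonalProjection 𝔨 (U y))
    (hC : ∀ x : 𝔥, C x = orthogonalProjection 𝔨ᗮ (U x))
    (hD : ∀ y : 𝔥ᗮ, D y = orthogonalProjection 𝔨ᗮ (U y))
    (φ : ℕ → ℝ) (Wn : ℕ → (H →L[ℂ] H))
    (Pi' Φ' : ℕ → Polynomial ℂ) (n : ℕ)
    (hblock : ∀ x : 𝔥, ∀ y : 𝔥ᗮ,
      Wn n ((x : H) + (y : H)) =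
        ((Polynomial.aeval (adjoint A ∘L A) (Pi' n) x +
          (Complex.I • (Polynomial.aeval (adjoint A ∘L A) (Φ' n) ∘L (adjoint A ∘L B))) y : 𝔥) : H) +
        (((Complex.I • (Polynomial.aeval (adjoint D ∘L D) ((Φ' n).map (starRingEnd ℂ)) ∘L
            (adjoint B ∘L A))) x +
          Polynomial.aeval (adjoint D ∘L D) ((Pi' n).map (starRingEnd ℂ)) y : 𝔥ᗮ) : H))
    (Θ Ω : Polynomial ℂ)
    (hΘ : Θ = Polynomial.C (Complex.exp (φ (n + 1) * Complex.I)) *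
      (Pi' n + Polynomial.C Complex.I * ((Φ' n).map (starRingEnd ℂ)) * (1 - Polynomial.X)))
    (hΩ : Ω = Polynomial.C (Complex.exp (φ (n + 1) * Complex.I)) *
      ((Pi' n).map (starRingEnd ℂ) + Polynomial.C Complex.I * Φ' n * Polynomial.X)) :
    ∀ x : 𝔥, ∀ y : 𝔥ᗮ,
      ((Complex.exp (φ (n + 1) * Complex.I) • (𝔨.subtypeL ∘L orthogonalProjection 𝔨) +
        Complex.exp (-φ (n + 1) * Complex.I) • (1 - 𝔨.subtypeL ∘L orthogonalProjection 𝔨)) ∘L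
        (U ∘L Wn n)) ((x : H) + (y : H)) =
      ((Polynomial.aeval (A ∘L adjoint A) Θ (A x) +
        Polynomial.aeval (A ∘L adjoint A) Ω (B y) : 𝔨) : H) +
      ((Polynomial.aeval (D ∘L adjoint D) (Ω.map (starRingEnd ℂ)) (C x) +
        Polynomial.aeval (D ∘L adjoint D) (Θ.map (starRingEnd ℂ)) (D y) : 𝔨ᗮ) : H) := by
  intro x y
  obtain rfl : A = blockEntry U 𝔥 𝔨 := ContinuousLinearMap.ext hA
  obtain rfl : B = blockEntry U 𝔥ᗮ 𝔨 := ContinuousLinearMap.ext hB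
  obtain rfl : C = blockEntry U 𝔥 𝔨ᗮ := ContinuousLinearMap.ext hC
  obtain rfl : D = blockEntry U 𝔥ᗮ 𝔨ᗮ := ContinuousLinearMap.ext hD
  have hU := isUnitaryBlock_blockEntry hU1 hU2 𝔥 𝔨
  have top := hU.top_row_aeval (Pi' n) ((Pi' n).map (starRingEnd ℂ)) (Polynomial.C I * Φ' n)
    (Polynomial.C I * (Φ' n).map (starRingEnd ℂ)) x y
  have bottom := hU.bottom_row_aeval (Pi' n) ((Pi' n).map (starRingEnd ℂ)) (Polynomial.C I * Φ' n)
    (Polynomial.C I * (Φ' n).map (starRingEnd ℂ)) x y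
  have hconj : starRingEnd ℂ (exp (φ (n + 1) * I)) = exp (-φ (n + 1) * I) := by
    rw [← Complex.exp_conj]; simp
  have hΘ' : Θ.map (starRingEnd ℂ) = Polynomial.C (exp (-φ (n + 1) * I)) *
      ((Pi' n).map (starRingEnd ℂ) - Polynomial.C I * Φ' n * (1 - X)) := by
    rw [hΘ]; simp [Polynomial.map_map, hconj]; ring
  have hΩ' : Ω.map (starRingEnd ℂ) = Polynomial.C (exp (-φ (n + 1) * I)) *
      (Pi' n - Polynomial.C I * (Φ' n).map (starRingEnd ℂ) * X) := by
    rw [hΩ]; simp [Polynomial.map_map, hconj]; ring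
  rw [comp_apply, comp_apply, hblock, apply_add_eq_blockEntry U 𝔥 𝔨,
    Submodule.smul_projection_add_smul_one_sub_projection_apply, hΘ', hΩ', hΘ, hΩ]
  simp only [smul_apply, comp_apply, aeval_C_mul_apply] at top bottom ⊢
  rw [top, bottom]
  simp only [smul_add, Submodule.coe_add, Submodule.coe_smul]

open ContinuousLinearMap Complex Submodule Polynomial in
theorem stmt8
    {H : Type*} [NormedAddCommGroup H] [InnerProductSpace ℂ H] [CompleteSpace H]
    (𝔥 𝔨 : Submodule ℂ H) [CompleteSpace 𝔥] [CompleteSpace 𝔨]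
    (U : H →L[ℂ] H) (hU1 : adjoint U ∘L U = 1) (hU2 : U ∘L adjoint U = 1)
    (A : 𝔥 →L[ℂ] 𝔨) (B : 𝔥ᗮ →L[ℂ] 𝔨) (C : 𝔥 →L[ℂ] 𝔨ᗮ) (D : 𝔥ᗮ →L[ℂ] 𝔨ᗮ)
    (hA : ∀ x : 𝔥, A x = orthogonalProjection 𝔨 (U x))
    (hB : ∀ y : 𝔥ᗮ, B y = orthogonalProjection 𝔨 (U y))
    (hC : ∀ x : 𝔥, C x = orthogonalProjection 𝔨ᗮ (U x))
    (hD : ∀ y : 𝔥ᗮ, D y = orthogonalProjection 𝔨ᗮ (U y))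
    (θ φ : ℕ → ℝ) (W Wn : ℕ → (H →L[ℂ] H))
    (hWdef : ∀ k, W k = (Complex.exp (θ k * Complex.I) • (𝔥.subtypeL ∘L orthogonalProjection 𝔥) +
          Complex.exp (-θ k * Complex.I) • (1 - 𝔥.subtypeL ∘L orthogonalProjection 𝔥)) ∘L
        (adjoint U ∘L
          ((Complex.exp (φ k * Complex.I) • (𝔨.subtypeL ∘L orthogonalProjection 𝔨) +
            Complex.exp (-φ k * Complex.I) • (1 - 𝔨.subtypeL ∘L orthogonalProjection 𝔨)) ∘L U)))
    (hWn0 : Wn 0 = 1) (hWnS : ∀ n, Wn (n + 1) = W (n + 1) ∘L Wn n)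
    (Pi' Φ' : ℕ → Polynomial ℂ) (n : ℕ)
    (hblock : ∀ x : 𝔥, ∀ y : 𝔥ᗮ,
      Wn n ((x : H) + (y : H)) =
        ((Polynomial.aeval (adjoint A ∘L A) (Pi' n) x +
          (Complex.I • (Polynomial.aeval (adjoint A ∘L A) (Φ' n) ∘L (adjoint A ∘L B))) y : 𝔥) : H) +
        (((Complex.I • (Polynomial.aeval (adjoint D ∘L D) ((Φ' n).map (starRingEnd ℂ)) ∘L
            (adjoint B ∘L A))) x +
          Polynomial.aeval (adjoint D ∘L D) ((Pi' n).map (starRingEnd ℂ)) y : 𝔥ᗮ) : H))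
    (Θ Ω : Polynomial ℂ)
    (hΘ : Θ = Polynomial.C (Complex.exp (φ (n + 1) * Complex.I)) *
      (Pi' n + Polynomial.C Complex.I * ((Φ' n).map (starRingEnd ℂ)) * (1 - Polynomial.X)))
    (hΩ : Ω = Polynomial.C (Complex.exp (φ (n + 1) * Complex.I)) *
      ((Pi' n).map (starRingEnd ℂ) + Polynomial.C Complex.I * Φ' n * Polynomial.X)) :
    ∀ x : 𝔥, ∀ y : 𝔥ᗮ,
      ((Complex.exp (φ (n + 1) * Complex.I) • (𝔨.subtypeL ∘L orthogonalProjection 𝔨) +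
        Complex.exp (-φ (n + 1) * Complex.I) • (1 - 𝔨.subtypeL ∘L orthogonalProjection 𝔨)) ∘L
        (U ∘L Wn n)) ((x : H) + (y : H)) =
      ((Polynomial.aeval (A ∘L adjoint A) Θ (A x) +
        Polynomial.aeval (A ∘L adjoint A) Ω (B y) : 𝔨) : H) +
      ((Polynomial.aeval (D ∘L adjoint D) (Ω.map (starRingEnd ℂ)) (C x) +
        Polynomial.aeval (D ∘L adjoint D) (Θ.map (starRingEnd ℂ)) (D y) : 𝔨ᗮ) : H) :=
  stmt8_general 𝔥 𝔨 U hU1 hU2 A B C D hA hB hC hD φ Wn Pi' Φ' n hblock Θ Ω hΘ hΩ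
end

section
/- Suppose f_σ ∈ 𝔨 and h_σ ∈ 𝔥 are unit vectors with AA* f_σ = σ² f_σ and A*A h_σ = σ² h_σ, and additionally A h_σ = σ f_σ. Then ⟨h_σ, (∏_{k=1}^n W_k) h_σ⟩ = Π_n(σ²) and ⟨f_σ, R_𝔨(φ_{n+1}) U (∏_{k=1}^n W_k) h_σ⟩ = σ Θ_n(σ²). -/
/-!
Because `A h = σ f`, the block form of `∏ W_k` sends `h` to `Π(σ²) h + i σ Φ̄(D*D) B* f`.
Unitarity of `U` gives `AA* + BB* = 1` on `𝔨` and `B*B + D*D = 1` on `𝔥ᗮ`, so `b = B* f` satisfies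
`B b = (1 - σ²) f` and `D*D b = σ² b`: the `𝔥ᗮ`-component is `i σ Φ̄(σ²) b`. Pairing with `h` kills
it. After applying `U`, pairing with `f ∈ 𝔨` only sees the blocks `A` and `B`, which gives
`σ Π(σ²) + i σ Φ̄(σ²) (1 - σ²)`, and `R_𝔨(φ)` contributes the phase `e^{iφ}`.
-/

open ContinuousLinearMap Submodule Polynomial

theorem ContinuousLinearMap.aeval_apply_of_apply_eq_smul {𝕜 E : Type*} [NormedField 𝕜]
    [NormedAddCommGroup E] [NormedSpace 𝕜 E] {T : E →L[𝕜] E} {c : 𝕜} {v : E}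
    (hv : T v = c • v) (p : 𝕜[X]) : aeval T p v = p.eval c • v := by
  induction p using Polynomial.induction_on' with
  | add p q hp hq => simp [hp, hq, add_smul]
  | monomial k a =>
    have hpow : (T ^ k) v = c ^ k • v := by
      induction k with
      | zero => simp
      | succ k ih => rw [pow_succ, mul_apply_eq_comp, hv, map_smul, ih, smul_smul, pow_succ']
    simp [aeval_monomial, hpow, Algebra.algebraMap_eq_smul_one, smul_smul]

section Blocks

variable {𝕜 E : Type*} [RCLike 𝕜] [NormedAddCommGroup E] [InnerProductSpace 𝕜 E]

def IsBlockOf (V : E →L[𝕜] E) (K L : Submodule 𝕜 E) [L.HasOrthogonalProjection]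
    (X : K →L[𝕜] L) : Prop :=
  ∀ x : K, X x = L.orthogonalProjectionOnto (V x)

variable {V : E →L[𝕜] E} {K L : Submodule 𝕜 E}

theorem IsBlockOf.inner_apply [L.HasOrthogonalProjection] {X : K →L[𝕜] L} (hX : IsBlockOf V K L X)
    (f : L) (x : K) : inner 𝕜 (f : E) (V x) = inner 𝕜 (f : E) (X x : E) := by
  rw [hX, ← coe_inner, inner_orthogonalProjectionOnto_eq_of_mem_left]

variable [CompleteSpace E] [CompleteSpace K] [CompleteSpace L]

theorem IsBlockOf.adjoint {X : K →L[𝕜] L} (hX : IsBlockOf V K L X) :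
    IsBlockOf (adjoint V) L K (adjoint X) := fun g ↦ by
  refine ext_inner_left 𝕜 fun x ↦ ?_
  rw [adjoint_inner_right, hX, inner_orthogonalProjectionOnto_eq_of_mem_right,
    inner_orthogonalProjectionOnto_eq_of_mem_left, adjoint_inner_right]

theorem IsBlockOf.apply_adjoint_add_apply_adjoint {X : K →L[𝕜] L} {Y : Kᗮ →L[𝕜] L}
    (hX : IsBlockOf V K L X) (hY : IsBlockOf V Kᗮ L Y) (hV : V ∘L ContinuousLinearMap.adjoint V = 1)
    (g : L) : X (ContinuousLinearMap.adjoint X g) + Y (ContinuousLinearMap.adjoint Y g) = g := by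
  rw [hX, hY, hX.adjoint, hY.adjoint, ← map_add, ← map_add, ← starProjection_apply,
    ← starProjection_apply, K.starProjection_add_starProjection_orthogonal, ← comp_apply V, hV,
    one_apply_eq_self, orthogonalProjectionOnto_mem_subspace_eq_self]

theorem IsBlockOf.adjoint_apply_add_adjoint_apply {X : K →L[𝕜] L} {Z : K →L[𝕜] Lᗮ}
    (hX : IsBlockOf V K L X) (hZ : IsBlockOf V K Lᗮ Z) (hV : ContinuousLinearMap.adjoint V ∘L V = 1)
    (x : K) : ContinuousLinearMap.adjoint X (X x) + ContinuousLinearMap.adjoint Z (Z x) = x := by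
  simpa only [adjoint_adjoint] using
    hX.adjoint.apply_adjoint_add_apply_adjoint hZ.adjoint (by rwa [adjoint_adjoint]) x

end Blocks

noncomputable def Submodule.phaseRotation {E : Type*} [NormedAddCommGroup E]
    [InnerProductSpace ℂ E] (K : Submodule ℂ E) [K.HasOrthogonalProjection] (φ : ℝ) : E →L[ℂ] E :=
  Complex.exp (φ * Complex.I) • K.starProjection +
    Complex.exp (-φ * Complex.I) • (1 - K.starProjection)

theorem Submodule.inner_phaseRotation_apply_of_mem {E : Type*} [NormedAddCommGroup E]
    [InnerProductSpace ℂ E] {K : Submodule ℂ E} [K.HasOrthogonalProjection] {f : E} (hf : f ∈ K)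
    (φ : ℝ) (z : E) :
    inner ℂ f (K.phaseRotation φ z) = Complex.exp (φ * Complex.I) * inner ℂ f z := by
  have hperp : inner ℂ f (z - K.starProjection z) = 0 :=
    inner_right_of_mem_orthogonal hf (sub_starProjection_mem_orthogonal z)
  have hproj : inner ℂ f (K.starProjection z) = inner ℂ f z := by
    rwa [inner_sub_right, sub_eq_zero, eq_comm] at hperp
  simp only [phaseRotation, add_apply, smul_apply, sub_apply, one_apply_eq_self, inner_add_right,
    inner_smul_right, hperp, hproj, mul_zero, add_zero]

open ContinuousLinearMap Complex Submodule Polynomial in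
theorem stmt9_general
    {H : Type*} [NormedAddCommGroup H] [InnerProductSpace ℂ H] [CompleteSpace H]
    (𝔥 𝔨 : Submodule ℂ H) [CompleteSpace 𝔥] [CompleteSpace 𝔨]
    (U : H →L[ℂ] H) (hU1 : adjoint U ∘L U = 1) (hU2 : U ∘L adjoint U = 1)
    (A : 𝔥 →L[ℂ] 𝔨) (B : 𝔥ᗮ →L[ℂ] 𝔨) (D : 𝔥ᗮ →L[ℂ] 𝔨ᗮ)
    (hA : ∀ x : 𝔥, A x = orthogonalProjection 𝔨 (U x))
    (hB : ∀ y : 𝔥ᗮ, B y = orthogonalProjection 𝔨 (U y))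
    (hD : ∀ y : 𝔥ᗮ, D y = orthogonalProjection 𝔨ᗮ (U y))
    (φ : ℕ → ℝ) (Wn : ℕ → (H →L[ℂ] H))
    (Pi' Φ' : ℕ → Polynomial ℂ) (n : ℕ)
    (hblock : ∀ x : 𝔥, ∀ y : 𝔥ᗮ,
      Wn n ((x : H) + (y : H)) =
        ((Polynomial.aeval (adjoint A ∘L A) (Pi' n) x +
          (Complex.I • (Polynomial.aeval (adjoint A ∘L A) (Φ' n) ∘L (adjoint A ∘L B))) y : 𝔥) : H) +
        (((Complex.I • (Polynomial.aeval (adjoint D ∘L D) ((Φ' n).map (starRingEnd ℂ)) ∘L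
            (adjoint B ∘L A))) x +
          Polynomial.aeval (adjoint D ∘L D) ((Pi' n).map (starRingEnd ℂ)) y : 𝔥ᗮ) : H))
    (Θ : Polynomial ℂ)
    (hΘ : Θ = Polynomial.C (Complex.exp (φ (n + 1) * Complex.I)) *
      (Pi' n + Polynomial.C Complex.I * ((Φ' n).map (starRingEnd ℂ)) * (1 - Polynomial.X)))
    (σ : ℝ) (fσ : 𝔨) (hσ : 𝔥) -- hσ : eigenvector in 𝔥
    (hfnorm : ‖fσ‖ = 1) (hhnorm : ‖hσ‖ = 1)
    (hf : A (adjoint A fσ) = ((σ : ℂ) ^ 2) • fσ)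
    (hh : adjoint A (A hσ) = ((σ : ℂ) ^ 2) • hσ)
    (hAh : A hσ = (σ : ℂ) • fσ) :
    inner ℂ (hσ : H) (Wn n (hσ : H)) = (Pi' n).eval ((σ : ℂ) ^ 2) ∧
    inner ℂ (fσ : H)
      (((Complex.exp (φ (n + 1) * Complex.I) • (𝔨.subtypeL ∘L orthogonalProjection 𝔨) +
        Complex.exp (-φ (n + 1) * Complex.I) • (1 - 𝔨.subtypeL ∘L orthogonalProjection 𝔨)) ∘L
        (U ∘L Wn n)) (hσ : H)) = (σ : ℂ) * Θ.eval ((σ : ℂ) ^ 2) := by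
  have hAU : IsBlockOf U 𝔥 𝔨 A := hA
  have hBU : IsBlockOf U 𝔥ᗮ 𝔨 B := hB
  have hDU : IsBlockOf U 𝔥ᗮ 𝔨ᗮ D := hD
  set s : ℂ := (σ : ℂ) ^ 2
  set b : 𝔥ᗮ := adjoint B fσ with hb
  have hBb : B b = (1 - s) • fσ := by
    rw [sub_smul, one_smul, ← hf]
    exact eq_sub_of_add_eq' (hAU.apply_adjoint_add_apply_adjoint hBU hU2 fσ)
  have hDb : (adjoint D ∘L D) b = s • b := by
    rw [comp_apply, eq_sub_of_add_eq' (hBU.adjoint_apply_add_adjoint_apply hDU hU1 b), hBb,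
      map_smul]
    module
  have hWn : Wn n hσ = (Pi' n).eval s • (hσ : H) +
      (I * σ * ((Φ' n).map (starRingEnd ℂ)).eval s) • (b : H) := by
    have h := hblock hσ 0
    simp only [ZeroMemClass.coe_zero, add_zero, map_zero, smul_apply, comp_apply,
      aeval_apply_of_apply_eq_smul (T := adjoint A ∘L A) hh, hAh, map_smul, ← hb,
      aeval_apply_of_apply_eq_smul hDb, Submodule.coe_smul] at h
    rw [h]
    module
  have hh1 : inner ℂ (hσ : H) hσ = 1 := inner_self_eq_one_of_norm_eq_one hhnorm
  have hf1 : inner ℂ (fσ : H) fσ = 1 := inner_self_eq_one_of_norm_eq_one hfnorm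
  constructor
  · rw [hWn, inner_add_right, inner_smul_right, inner_smul_right, hh1,
      inner_right_of_mem_orthogonal hσ.2 b.2, mul_one, mul_zero, add_zero]
  · calc _ = exp (φ (n + 1) * I) * inner ℂ (fσ : H) (U (Wn n hσ)) :=
          inner_phaseRotation_apply_of_mem fσ.2 _ _
      _ = exp (φ (n + 1) * I) * ((Pi' n).eval s * σ +
          I * σ * ((Φ' n).map (starRingEnd ℂ)).eval s * (1 - s)) := by
        rw [hWn, map_add, map_smul, map_smul, inner_add_right, inner_smul_right, inner_smul_right,
          hAU.inner_apply, hBU.inner_apply, hAh, hBb, Submodule.coe_smul, Submodule.coe_smul,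
          inner_smul_right, inner_smul_right, hf1]
        ring
      _ = _ := by
        rw [hΘ]
        simp only [eval_mul, eval_C, eval_add, eval_sub, eval_one, eval_X]
        ring

open ContinuousLinearMap Complex Submodule Polynomial in
theorem stmt9
    {H : Type*} [NormedAddCommGroup H] [InnerProductSpace ℂ H] [CompleteSpace H]
    (𝔥 𝔨 : Submodule ℂ H) [CompleteSpace 𝔥] [CompleteSpace 𝔨]
    (U : H →L[ℂ] H) (hU1 : adjoint U ∘L U = 1) (hU2 : U ∘L adjoint U = 1)
    (A : 𝔥 →L[ℂ] 𝔨) (B : 𝔥ᗮ →L[ℂ] 𝔨) (C : 𝔥 →L[ℂ] 𝔨ᗮ) (D : 𝔥ᗮ →L[ℂ] 𝔨ᗮ)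
    (hA : ∀ x : 𝔥, A x = orthogonalProjection 𝔨 (U x))
    (hB : ∀ y : 𝔥ᗮ, B y = orthogonalProjection 𝔨 (U y))
    (hC : ∀ x : 𝔥, C x = orthogonalProjection 𝔨ᗮ (U x))
    (hD : ∀ y : 𝔥ᗮ, D y = orthogonalProjection 𝔨ᗮ (U y))
    (θ φ : ℕ → ℝ) (W Wn : ℕ → (H →L[ℂ] H))
    (hWdef : ∀ k, W k = (Complex.exp (θ k * Complex.I) • (𝔥.subtypeL ∘L orthogonalProjection 𝔥) +
          Complex.exp (-θ k * Complex.I) • (1 - 𝔥.subtypeL ∘L orthogonalProjection 𝔥)) ∘L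
        (adjoint U ∘L
          ((Complex.exp (φ k * Complex.I) • (𝔨.subtypeL ∘L orthogonalProjection 𝔨) +
            Complex.exp (-φ k * Complex.I) • (1 - 𝔨.subtypeL ∘L orthogonalProjection 𝔨)) ∘L U)))
    (hWn0 : Wn 0 = 1) (hWnS : ∀ n, Wn (n + 1) = W (n + 1) ∘L Wn n)
    (Pi' Φ' : ℕ → Polynomial ℂ) (n : ℕ)
    (hblock : ∀ x : 𝔥, ∀ y : 𝔥ᗮ,
      Wn n ((x : H) + (y : H)) =
        ((Polynomial.aeval (adjoint A ∘L A) (Pi' n) x +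
          (Complex.I • (Polynomial.aeval (adjoint A ∘L A) (Φ' n) ∘L (adjoint A ∘L B))) y : 𝔥) : H) +
        (((Complex.I • (Polynomial.aeval (adjoint D ∘L D) ((Φ' n).map (starRingEnd ℂ)) ∘L
            (adjoint B ∘L A))) x +
          Polynomial.aeval (adjoint D ∘L D) ((Pi' n).map (starRingEnd ℂ)) y : 𝔥ᗮ) : H))
    (Θ : Polynomial ℂ)
    (hΘ : Θ = Polynomial.C (Complex.exp (φ (n + 1) * Complex.I)) *
      (Pi' n + Polynomial.C Complex.I * ((Φ' n).map (starRingEnd ℂ)) * (1 - Polynomial.X)))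
    (σ : ℝ) (fσ : 𝔨) (hσ : 𝔥) -- hσ : eigenvector in 𝔥
    (hfnorm : ‖fσ‖ = 1) (hhnorm : ‖hσ‖ = 1)
    (hf : A (adjoint A fσ) = ((σ : ℂ) ^ 2) • fσ)
    (hh : adjoint A (A hσ) = ((σ : ℂ) ^ 2) • hσ)
    (hAh : A hσ = (σ : ℂ) • fσ) :
    inner ℂ (hσ : H) (Wn n (hσ : H)) = (Pi' n).eval ((σ : ℂ) ^ 2) ∧
    inner ℂ (fσ : H)
      (((Complex.exp (φ (n + 1) * Complex.I) • (𝔨.subtypeL ∘L orthogonalProjection 𝔨) +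
        Complex.exp (-φ (n + 1) * Complex.I) • (1 - 𝔨.subtypeL ∘L orthogonalProjection 𝔨)) ∘L
        (U ∘L Wn n)) (hσ : H)) = (σ : ℂ) * Θ.eval ((σ : ℂ) ^ 2) :=
  stmt9_general 𝔥 𝔨 U hU1 hU2 A B D hA hB hD φ Wn Pi' Φ' n hblock Θ hΘ σ fσ hσ hfnorm hhnorm hf hh
    hAh
end

section
/- Let f₁ ∈ ker B* ⊆ 𝔨 and f₀ ∈ ker A* ⊆ 𝔨. Then (∏_{k=1}^n W_k)(A*f₁ ⊕ 0) = (∏_{k=1}^n e^{i(θ_k+φ_k)}) (A*f₁ ⊕ 0) and (∏_{k=1}^n W_k)(0 ⊕ B*f₀) = (∏_{k=1}^n e^{i(φ_k−θ_k)}) (0 ⊕ B*f₀). In particular, A*f₁ ⊕ 0 and 0 ⊕ B*f₀ are eigenvectors of ∏_{k=1}^n W_k with eigenvalues ∏ e^{i(θ_k+φ_k)} and ∏ e^{i(φ_k−θ_k)} respectively. -/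
/-!
Since `A* f ⊕ B* f = U* f`, the condition `B* f₁ = 0` gives `A* f₁ = U* f₁ ∈ 𝔥`. As `U U* = 1`,
`U` maps this vector back to `f₁ ∈ 𝔨`, where `R_𝔨(φ)` acts as `e^{iφ}`, and on `𝔥` the rotation
`R_𝔥(θ)` acts as `e^{iθ}`; so every `W_k` multiplies it by `e^{i(θ_k + φ_k)}`. The case
`A* f₀ = 0` is the same with `𝔥ᗮ`, on which `R_𝔥(θ)` acts as `e^{-iθ}`.
-/

open ContinuousLinearMap Complex Submodule

namespace Submodule

variable {H : Type*} [NormedAddCommGroup H] [InnerProductSpace ℂ H]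
  (K : Submodule ℂ H) [K.HasOrthogonalProjection]

noncomputable def phaseRotation_s15 (t : ℝ) : H →L[ℂ] H :=
  exp (t * I) • K.starProjection + exp (-t * I) • (1 - K.starProjection)

theorem phaseRotation_apply_of_mem {x : H} (hx : x ∈ K) (t : ℝ) :
    K.phaseRotation_s15 t x = exp (t * I) • x := by
  simp [phaseRotation_s15, starProjection_eq_self_iff.mpr hx]

theorem phaseRotation_apply_of_mem_orthogonal {x : H} (hx : x ∈ Kᗮ) (t : ℝ) :
    K.phaseRotation_s15 t x = exp (-t * I) • x := by
  simp [phaseRotation_s15, (starProjection_apply_eq_zero_iff K).mpr hx]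

end Submodule

section

variable {H : Type*} [NormedAddCommGroup H] [InnerProductSpace ℂ H] [CompleteSpace H]

theorem coe_adjoint_apply_of_apply_eq_orthogonalProjectionOnto {K L : Submodule ℂ H}
    [CompleteSpace K] [CompleteSpace L] {U : H →L[ℂ] H} {A : K →L[ℂ] L}
    (hA : ∀ x : K, A x = L.orthogonalProjectionOnto (U x)) (f : L) :
    (adjoint A f : H) = K.starProjection (adjoint U f) := by
  have : A = L.orthogonalProjectionOnto ∘L U ∘L K.subtypeL := by ext x; simp [hA]
  subst this
  rw [adjoint_comp, adjoint_comp, adjoint_orthogonalProjectionOnto, adjoint_subtypeL]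
  rfl

theorem phaseRotation_comp_adjoint_comp_phaseRotation_comp_apply_adjoint
    (K L : Submodule ℂ H) [K.HasOrthogonalProjection] [L.HasOrthogonalProjection]
    {U : H →L[ℂ] H} (hU : U ∘L adjoint U = 1) (s t : ℝ) (f : L) :
    (K.phaseRotation_s15 s ∘L adjoint U ∘L L.phaseRotation_s15 t ∘L U) (adjoint U f) =
      exp (t * I) • K.phaseRotation_s15 s (adjoint U f) := by
  have hUf : U (adjoint U f) = f := congr($hU f)
  simp only [comp_apply, hUf, L.phaseRotation_apply_of_mem f.2, map_smul]

end

theorem ContinuousLinearMap.apply_eq_prod_smul_of_apply_eq_smul {R M : Type*} [CommSemiring R]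
    [TopologicalSpace M] [AddCommMonoid M] [Module R M] {W Wn : ℕ → M →L[R] M}
    (hWn0 : Wn 0 = 1) (hWnS : ∀ n, Wn (n + 1) = W (n + 1) ∘L Wn n)
    {c : ℕ → R} {x : M} (hx : ∀ k, W k x = c k • x) (n : ℕ) :
    Wn n x = (∏ k ∈ Finset.Icc 1 n, c k) • x := by
  induction n with
  | zero => simp [hWn0]
  | succ n ih =>
    rw [hWnS, comp_apply, ih, map_smul, hx, Finset.prod_Icc_succ_top (by omega), smul_smul,
      mul_comm]

open ContinuousLinearMap Complex Submodule Polynomial in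
theorem stmt15_general
    {H : Type*} [NormedAddCommGroup H] [InnerProductSpace ℂ H] [CompleteSpace H]
    (𝔥 𝔨 : Submodule ℂ H) [CompleteSpace 𝔥] [CompleteSpace 𝔨]
    (U : H →L[ℂ] H) (hU2 : U ∘L adjoint U = 1)
    (A : 𝔥 →L[ℂ] 𝔨) (B : 𝔥ᗮ →L[ℂ] 𝔨)
    (hA : ∀ x : 𝔥, A x = orthogonalProjection 𝔨 (U x))
    (hB : ∀ y : 𝔥ᗮ, B y = orthogonalProjection 𝔨 (U y))
    (θ φ : ℕ → ℝ) (W Wn : ℕ → (H →L[ℂ] H))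
    (hWdef : ∀ k, W k = (Complex.exp (θ k * Complex.I) • (𝔥.subtypeL ∘L orthogonalProjection 𝔥) +
          Complex.exp (-θ k * Complex.I) • (1 - 𝔥.subtypeL ∘L orthogonalProjection 𝔥)) ∘L
        (adjoint U ∘L
          ((Complex.exp (φ k * Complex.I) • (𝔨.subtypeL ∘L orthogonalProjection 𝔨) +
            Complex.exp (-φ k * Complex.I) • (1 - 𝔨.subtypeL ∘L orthogonalProjection 𝔨)) ∘L U)))
    (hWn0 : Wn 0 = 1) (hWnS : ∀ n, Wn (n + 1) = W (n + 1) ∘L Wn n)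
    (n : ℕ) :
    (∀ f₁ : 𝔨, adjoint B f₁ = 0 →
      Wn n ((adjoint A f₁ : 𝔥) : H) =
        (∏ k ∈ Finset.Icc 1 n, Complex.exp ((θ k + φ k) * Complex.I)) • ((adjoint A f₁ : 𝔥) : H)) ∧
    (∀ f₀ : 𝔨, adjoint A f₀ = 0 →
      Wn n ((adjoint B f₀ : 𝔥ᗮ) : H) =
        (∏ k ∈ Finset.Icc 1 n, Complex.exp ((φ k - θ k) * Complex.I)) • ((adjoint B f₀ : 𝔥ᗮ) : H)) := by
  have hW : ∀ k, W k = 𝔥.phaseRotation_s15 (θ k) ∘L adjoint U ∘L 𝔨.phaseRotation_s15 (φ k) ∘L U := hWdef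
  have hA' := coe_adjoint_apply_of_apply_eq_orthogonalProjectionOnto hA
  have hB' := coe_adjoint_apply_of_apply_eq_orthogonalProjectionOnto hB
  refine ⟨fun f hf => ?_, fun f hf => ?_⟩
  · have hmem : adjoint U f ∈ 𝔥 := by
      rw [← orthogonal_orthogonal 𝔥, ← starProjection_apply_eq_zero_iff, ← hB', hf,
        Submodule.coe_zero]
    rw [hA', starProjection_eq_self_iff.mpr hmem]
    refine apply_eq_prod_smul_of_apply_eq_smul hWn0 hWnS (fun k => ?_) n
    rw [hW, phaseRotation_comp_adjoint_comp_phaseRotation_comp_apply_adjoint _ _ hU2,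
      phaseRotation_apply_of_mem _ hmem, smul_smul, ← exp_add]
    congr 2; ring
  · have hmem : adjoint U f ∈ 𝔥ᗮ := by
      rw [← starProjection_apply_eq_zero_iff, ← hA', hf, Submodule.coe_zero]
    rw [hB', starProjection_eq_self_iff.mpr hmem]
    refine apply_eq_prod_smul_of_apply_eq_smul hWn0 hWnS (fun k => ?_) n
    rw [hW, phaseRotation_comp_adjoint_comp_phaseRotation_comp_apply_adjoint _ _ hU2,
      phaseRotation_apply_of_mem_orthogonal _ hmem, smul_smul, ← exp_add]
    congr 2; ring

open ContinuousLinearMap Complex Submodule Polynomial in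
theorem stmt15
    {H : Type*} [NormedAddCommGroup H] [InnerProductSpace ℂ H] [CompleteSpace H]
    (𝔥 𝔨 : Submodule ℂ H) [CompleteSpace 𝔥] [CompleteSpace 𝔨]
    (U : H →L[ℂ] H) (hU1 : adjoint U ∘L U = 1) (hU2 : U ∘L adjoint U = 1)
    (A : 𝔥 →L[ℂ] 𝔨) (B : 𝔥ᗮ →L[ℂ] 𝔨) (C : 𝔥 →L[ℂ] 𝔨ᗮ) (D : 𝔥ᗮ →L[ℂ] 𝔨ᗮ)
    (hA : ∀ x : 𝔥, A x = orthogonalProjection 𝔨 (U x))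
    (hB : ∀ y : 𝔥ᗮ, B y = orthogonalProjection 𝔨 (U y))
    (hC : ∀ x : 𝔥, C x = orthogonalProjection 𝔨ᗮ (U x))
    (hD : ∀ y : 𝔥ᗮ, D y = orthogonalProjection 𝔨ᗮ (U y))
    (θ φ : ℕ → ℝ) (W Wn : ℕ → (H →L[ℂ] H))
    (hWdef : ∀ k, W k = (Complex.exp (θ k * Complex.I) • (𝔥.subtypeL ∘L orthogonalProjection 𝔥) +
          Complex.exp (-θ k * Complex.I) • (1 - 𝔥.subtypeL ∘L orthogonalProjection 𝔥)) ∘L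
        (adjoint U ∘L
          ((Complex.exp (φ k * Complex.I) • (𝔨.subtypeL ∘L orthogonalProjection 𝔨) +
            Complex.exp (-φ k * Complex.I) • (1 - 𝔨.subtypeL ∘L orthogonalProjection 𝔨)) ∘L U)))
    (hWn0 : Wn 0 = 1) (hWnS : ∀ n, Wn (n + 1) = W (n + 1) ∘L Wn n)
    (n : ℕ) :
    (∀ f₁ : 𝔨, adjoint B f₁ = 0 →
      Wn n ((adjoint A f₁ : 𝔥) : H) =
        (∏ k ∈ Finset.Icc 1 n, Complex.exp ((θ k + φ k) * Complex.I)) • ((adjoint A f₁ : 𝔥) : H)) ∧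
    (∀ f₀ : 𝔨, adjoint A f₀ = 0 →
      Wn n ((adjoint B f₀ : 𝔥ᗮ) : H) =
        (∏ k ∈ Finset.Icc 1 n, Complex.exp ((φ k - θ k) * Complex.I)) • ((adjoint B f₀ : 𝔥ᗮ) : H)) :=
  stmt15_general 𝔥 𝔨 U hU2 A B hA hB θ φ W Wn hWdef hWn0 hWnS n
end

section
/- Let σ ∈ (0,1), AA*f_σ = σ²f_σ, ‖f_σ‖ = 1. In the basis e₁ := (A*/σ)f_σ ⊕ 0, e₂ := 0 ⊕ (B*/√(1−σ²))f_σ of the two-dimensional subspace ℒ_σ, the operator ∏_{k=1}^n W_k acts by the 2×2 matrix [[Π_n(σ²), iΦ_n(σ²)σ√(1−σ²)],[iΦ̄_n(σ²)σ√(1−σ²), Π̄_n(σ²)]]. Consequently, this 2×2 matrix equals ∏_{k=1}^n e^{iθ_k Z} U_σ e^{iφ_k Z} U_σ, where Z = diag(1,−1) and U_σ = [[σ, √(1−σ²)],[√(1−σ²), −σ]]. -/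
/-!
Let `t = √(1 - σ²)`. The `𝔨ᗮ`-component of `U e₁` is `t • g` for some `g ∈ 𝔨ᗮ`, and
unitarity of `U` then forces both `U : (e₁, e₂) ↦ (f_σ, g)` and `U* : (f_σ, g) ↦ (e₁, e₂)` to act
by the reflection matrix `U_σ`. The phase reflections `R_𝔥(θ)`, `R_𝔨(φ)` are diagonal in these
pairs, so `W_k` acts on `span {e₁, e₂}` by `e^{iθ_k Z} U_σ e^{iφ_k Z} U_σ`, and the product of the
`W_k` by the product of these matrices. Each factor has the shape
`[[P, i Q σ t], [i Q̄ σ t, P̄]]` with `P, Q` evaluated at `σ²`, and multiplying two matrices of this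
shape reproduces exactly the recursion defining `Π_n` and `Φ_n`.
-/

open ContinuousLinearMap Submodule

section ActsByMatrix

variable {R M N P ι κ μ : Type*} [CommSemiring R] [AddCommMonoid N] [AddCommMonoid P]
  [Module R N] [Module R P] [Fintype κ] [Fintype μ]

def ActsByMatrix (T : M → N) (e : ι → M) (f : κ → N) (A : Matrix κ ι R) : Prop :=
  ∀ j, T (e j) = ∑ i, A i j • f i

lemma actsByMatrix_id [DecidableEq κ] (e : κ → N) : ActsByMatrix id e e (1 : Matrix κ κ R) := by
  intro j
  simp [Matrix.one_apply, ite_smul]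

lemma ActsByMatrix.comp {F : Type*} [FunLike F N P] [LinearMapClass F R N P] {S : F} {T : M → N}
    {e : ι → M} {f : κ → N} {g : μ → P} {A : Matrix μ κ R} {B : Matrix κ ι R}
    (hS : ActsByMatrix S f g A) (hT : ActsByMatrix T e f B) :
    ActsByMatrix (S ∘ T) e g (A * B) := by
  intro j
  calc S (T (e j)) = ∑ i, B i j • ∑ k, A k i • g k := by
        simp only [hT j, map_sum, map_smul, hS _]
    _ = ∑ k, (A * B) k j • g k := by
      simp only [Finset.smul_sum, smul_smul, Matrix.mul_apply, Finset.sum_smul]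
      rw [Finset.sum_comm]
      simp only [mul_comm]

lemma actsByMatrix_fin_two_iff {T : M → N} {e₁ e₂ : M} {f₁ f₂ : N}
    {A : Matrix (Fin 2) (Fin 2) R} :
    ActsByMatrix T ![e₁, e₂] ![f₁, f₂] A ↔
      T e₁ = A 0 0 • f₁ + A 1 0 • f₂ ∧ T e₂ = A 0 1 • f₁ + A 1 1 • f₂ := by
  simp [ActsByMatrix, Fin.forall_fin_two, Fin.sum_univ_two]

end ActsByMatrix

section Rotation

variable {K M N : Type*} [Field K] [AddCommGroup M] [Module K M] [AddCommGroup N] [Module K N]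

lemma eq_of_eq_rotation {s c : K} (hsc : s ^ 2 + c ^ 2 = 1) (hc : c ≠ 0) {y z w : M}
    (h : y = s • (s • y + c • z) + c • w) : w = c • y - s • z := by
  apply smul_right_injective M hc
  linear_combination (norm := module) -h - hsc • y

lemma actsByMatrix_rotation_of_inverse {F G : Type*} [FunLike F M N] [LinearMapClass F K M N]
    [FunLike G N M] [LinearMapClass G K N M] {U : F} {V : G}
    (hVU : ∀ x, V (U x) = x) (hUV : ∀ y, U (V y) = y) {s c : K} (hsc : s ^ 2 + c ^ 2 = 1)
    (hc : c ≠ 0) {e₁ e₂ : M} {f g : N} (hUe₁ : U e₁ = s • f + c • g)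
    (hVf : V f = s • e₁ + c • e₂) :
    ActsByMatrix U ![e₁, e₂] ![f, g] !![s, c; c, -s] ∧
      ActsByMatrix V ![f, g] ![e₁, e₂] !![s, c; c, -s] := by
  simp only [actsByMatrix_fin_two_iff, Matrix.of_apply, Matrix.cons_val', Matrix.cons_val_zero,
    Matrix.cons_val_one, Matrix.empty_val', Matrix.cons_val_fin_one, neg_smul, ← sub_eq_add_neg]
  refine ⟨⟨hUe₁, eq_of_eq_rotation hsc hc ?_⟩, ⟨hVf, eq_of_eq_rotation hsc hc ?_⟩⟩
  · rw [← hUe₁, ← map_smul, ← map_smul, ← map_add, ← hVf, hUV]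
  · rw [← hVf, ← map_smul, ← map_smul, ← map_add, ← hUe₁, hVU]

end Rotation

section HilbertSpace

variable {𝕜 E : Type*} [RCLike 𝕜] [NormedAddCommGroup E] [InnerProductSpace 𝕜 E]

lemma reflection_actsByMatrix (K : Submodule 𝕜 E) [K.HasOrthogonalProjection] {x y : E}
    (hx : x ∈ K) (hy : y ∈ Kᗮ) (a b : 𝕜) :
    ActsByMatrix (a • K.starProjection + b • (1 - K.starProjection) : E →L[𝕜] E)
      ![x, y] ![x, y] !![a, 0; 0, b] := by
  rw [actsByMatrix_fin_two_iff]
  simp [starProjection_eq_self_iff.mpr hx, (starProjection_apply_eq_zero_iff K).mpr hy]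

lemma adjoint_apply_eq_of_apply_eq [CompleteSpace E] {K L : Submodule 𝕜 E} [CompleteSpace K]
    [CompleteSpace L] {T : K →L[𝕜] L} {U : E →L[𝕜] E}
    (hT : ∀ x : K, T x = L.orthogonalProjectionOnto (U x)) (y : L) :
    (adjoint T y : E) = K.starProjection (adjoint U y) := by
  have : T = L.orthogonalProjectionOnto ∘L U ∘L K.subtypeL := by ext x; simp [hT]
  rw [this, adjoint_comp, adjoint_comp, adjoint_orthogonalProjectionOnto, adjoint_subtypeL]
  rfl

lemma exists_mem_orthogonal_eq_add (K : Submodule 𝕜 E) [K.HasOrthogonalProjection] {x f : E}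
    {s c : 𝕜} (hx : K.starProjection x = s • f) (hc : c ≠ 0) :
    ∃ g ∈ Kᗮ, x = s • f + c • g :=
  ⟨c⁻¹ • (x - s • f), Kᗮ.smul_mem _ (hx ▸ sub_starProjection_mem_orthogonal x),
    by rw [smul_inv_smul₀ hc, add_sub_cancel]⟩

variable [CompleteSpace E]

lemma qsvtStep_actsByMatrix (𝔥 𝔨 : Submodule 𝕜 E) [𝔥.HasOrthogonalProjection]
    [𝔨.HasOrthogonalProjection] (U : E →L[𝕜] E) {e₁ e₂ f g : E} (he₁ : e₁ ∈ 𝔥) (he₂ : e₂ ∈ 𝔥ᗮ)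
    (hf : f ∈ 𝔨) (hg : g ∈ 𝔨ᗮ) {V : Matrix (Fin 2) (Fin 2) 𝕜}
    (hU : ActsByMatrix U ![e₁, e₂] ![f, g] V) (hU' : ActsByMatrix (adjoint U) ![f, g] ![e₁, e₂] V)
    (a₁ b₁ a₂ b₂ : 𝕜) :
    ActsByMatrix
      ((a₁ • 𝔥.starProjection + b₁ • (1 - 𝔥.starProjection)) ∘L
        (adjoint U ∘L ((a₂ • 𝔨.starProjection + b₂ • (1 - 𝔨.starProjection)) ∘L U)))
      ![e₁, e₂] ![e₁, e₂] (!![a₁, 0; 0, b₁] * V * !![a₂, 0; 0, b₂] * V) := by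
  simp only [coe_comp, Matrix.mul_assoc]
  exact (reflection_actsByMatrix 𝔥 he₁ he₂ a₁ b₁).comp <| hU'.comp <|
    (reflection_actsByMatrix 𝔨 hf hg a₂ b₂).comp hU

lemma singularVectors_actsByMatrix {U : E →L[𝕜] E} (hU1 : adjoint U ∘L U = 1)
    (hU2 : U ∘L adjoint U = 1) {𝔥 𝔨 : Submodule 𝕜 E} [CompleteSpace 𝔥] [CompleteSpace 𝔨]
    {A : 𝔥 →L[𝕜] 𝔨} {B : 𝔥ᗮ →L[𝕜] 𝔨} (hA : ∀ x : 𝔥, A x = 𝔨.orthogonalProjectionOnto (U x))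
    (hB : ∀ y : 𝔥ᗮ, B y = 𝔨.orthogonalProjectionOnto (U y)) {s c : 𝕜}
    (hsc : s ^ 2 + c ^ 2 = 1) (hs : s ≠ 0) (hc : c ≠ 0) {f : 𝔨}
    (hf : A (adjoint A f) = s ^ 2 • f) :
    ∃ g ∈ 𝔨ᗮ,
      ActsByMatrix U ![s⁻¹ • (adjoint A f : E), c⁻¹ • (adjoint B f : E)] ![(f : E), g]
        !![s, c; c, -s] ∧
      ActsByMatrix (adjoint U) ![(f : E), g] ![s⁻¹ • (adjoint A f : E), c⁻¹ • (adjoint B f : E)]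
        !![s, c; c, -s] := by
  have hUf : adjoint U f = s • s⁻¹ • (adjoint A f : E) + c • c⁻¹ • (adjoint B f : E) := by
    rw [smul_inv_smul₀ hs, smul_inv_smul₀ hc, adjoint_apply_eq_of_apply_eq hA,
      adjoint_apply_eq_of_apply_eq hB, starProjection_add_starProjection_orthogonal]
  have hPe : 𝔨.starProjection (U (s⁻¹ • (adjoint A f : E))) = s • (f : E) := by
    rw [map_smul, map_smul, starProjection_apply, ← hA, hf, Submodule.coe_smul, smul_smul]
    congr 1
    field_simp
  obtain ⟨g, hg, hUe₁⟩ := exists_mem_orthogonal_eq_add 𝔨 hPe hc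
  refine ⟨g, hg, actsByMatrix_rotation_of_inverse (fun x => ?_) (fun y => ?_) hsc hc hUe₁ hUf⟩
  · simpa using DFunLike.congr_fun hU1 x
  · simpa using DFunLike.congr_fun hU2 y

end HilbertSpace

section QSVTMatrix

open Complex ComplexConjugate Polynomial

def qsvtMatrix (s c : ℝ) (p q : ℂ) : Matrix (Fin 2) (Fin 2) ℂ :=
  !![p, I * q * s * c; I * conj q * s * c, conj p]

lemma qsvtMatrix_one_zero (s c : ℝ) : qsvtMatrix s c 1 0 = 1 := by
  simp [qsvtMatrix, Matrix.one_fin_two]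

lemma qsvtMatrix_mul (s c : ℝ) (p q p' q' : ℂ) :
    qsvtMatrix s c p q * qsvtMatrix s c p' q' =
      qsvtMatrix s c (p * p' - q * conj q' * (c ^ 2 * s ^ 2)) (p * q' + q * conj p') := by
  rw [qsvtMatrix, qsvtMatrix, qsvtMatrix, Matrix.mul_fin_two]
  congr 1
  simp only [map_add, map_sub, map_mul, map_pow, conj_conj, conj_ofReal, Matrix.vecCons_inj,
    and_true]
  refine ⟨⟨?_, by ring⟩, by ring, ?_⟩
  · linear_combination q * conj q' * s ^ 2 * c ^ 2 * I_sq
  · linear_combination conj q * q' * s ^ 2 * c ^ 2 * I_sq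

lemma exp_ofReal_mul_I_sub_exp_neg (x : ℝ) :
    exp (x * I) - exp (-x * I) = 2 * I * Real.sin x := by
  rw [ofReal_sin, sin]
  linear_combination (exp (x * I) - exp (-x * I)) * I_sq

lemma qsvtMatrix_eq_step {s c : ℝ} (hsc : s ^ 2 + c ^ 2 = 1) (θ φ : ℝ) :
    qsvtMatrix s c (exp (θ * I) * exp (-φ * I) + exp (θ * I) * (2 * I * Real.sin φ) * s ^ 2)
        (2 * exp (θ * I) * Real.sin φ) =
      !![exp (θ * I), 0; 0, exp (-θ * I)] * !![(s : ℂ), c; c, -s] *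
        !![exp (φ * I), 0; 0, exp (-φ * I)] * !![(s : ℂ), c; c, -s] := by
  have hsc' : (s : ℂ) ^ 2 + c ^ 2 = 1 := by exact_mod_cast hsc
  have hsin := exp_ofReal_mul_I_sub_exp_neg φ
  simp only [neg_mul] at hsin
  rw [qsvtMatrix, Matrix.mul_fin_two, Matrix.mul_fin_two, Matrix.mul_fin_two]
  congr 1
  simp only [map_add, map_mul, map_ofNat, map_pow, ← exp_conj, conj_ofReal, conj_I, neg_mul,
    mul_neg, map_neg, neg_neg, mul_zero, zero_mul, add_zero, zero_add, Matrix.vecCons_inj,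
    and_true]
  refine ⟨⟨?_, ?_⟩, ?_, ?_⟩
  · linear_combination -(exp (θ * I) * exp (-(φ * I))) * hsc' - exp (θ * I) * s ^ 2 * hsin
  · linear_combination -(exp (θ * I) * s * c) * hsin
  · linear_combination -(exp (-(θ * I)) * s * c) * hsin
  · linear_combination -(exp (-(θ * I)) * exp (φ * I)) * hsc' + exp (-(θ * I)) * s ^ 2 * hsin

lemma eval_map_conj {p : ℂ[X]} {x : ℂ} (hx : conj x = x) :
    (p.map (starRingEnd ℂ)).eval x = conj (p.eval x) := by
  rw [eval_map, ← eval₂_at_apply, hx]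

lemma qsvtMatrix_eval_succ {s c : ℝ} (hsc : s ^ 2 + c ^ 2 = 1) (θ φ : ℝ)
    {P Q Pi Φ Pi' Φ' : ℂ[X]}
    (hP : P = C (exp (θ * I) * exp (-φ * I)) + C (exp (θ * I) * (2 * I * Real.sin φ)) * X)
    (hQ : Q = C (2 * exp (θ * I) * Real.sin φ))
    (hPi' : Pi' = P * Pi - Q * Φ.map (starRingEnd ℂ) * (1 - X) * X)
    (hΦ' : Φ' = P * Φ + Q * Pi.map (starRingEnd ℂ)) :
    qsvtMatrix s c (Pi'.eval ((s : ℂ) ^ 2)) (Φ'.eval ((s : ℂ) ^ 2)) =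
      !![exp (θ * I), 0; 0, exp (-θ * I)] * !![(s : ℂ), c; c, -s] *
        !![exp (φ * I), 0; 0, exp (-φ * I)] * !![(s : ℂ), c; c, -s] *
          qsvtMatrix s c (Pi.eval ((s : ℂ) ^ 2)) (Φ.eval ((s : ℂ) ^ 2)) := by
  have hx : conj ((s : ℂ) ^ 2) = (s : ℂ) ^ 2 := by simp
  have hc : (c : ℂ) ^ 2 = 1 - (s : ℂ) ^ 2 := by
    rw [eq_sub_iff_add_eq', ← ofReal_pow, ← ofReal_pow, ← ofReal_add, hsc, ofReal_one]
  rw [← qsvtMatrix_eq_step hsc, qsvtMatrix_mul, hPi', hΦ', hc]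
  simp only [hP, hQ, eval_sub, eval_mul, eval_add, eval_C, eval_X, eval_one, eval_map_conj hx]
  congr 2
  ring

end QSVTMatrix

open ContinuousLinearMap Complex Submodule Polynomial in
theorem stmt16_general
    {H : Type*} [NormedAddCommGroup H] [InnerProductSpace ℂ H] [CompleteSpace H]
    (𝔥 𝔨 : Submodule ℂ H) [CompleteSpace 𝔥] [CompleteSpace 𝔨]
    (U : H →L[ℂ] H) (hU1 : adjoint U ∘L U = 1) (hU2 : U ∘L adjoint U = 1)
    (A : 𝔥 →L[ℂ] 𝔨) (B : 𝔥ᗮ →L[ℂ] 𝔨)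
    (hA : ∀ x : 𝔥, A x = orthogonalProjection 𝔨 (U x))
    (hB : ∀ y : 𝔥ᗮ, B y = orthogonalProjection 𝔨 (U y))
    (θ φ : ℕ → ℝ) (W Wn : ℕ → (H →L[ℂ] H))
    (hWdef : ∀ k, W k = (Complex.exp (θ k * Complex.I) • (𝔥.subtypeL ∘L orthogonalProjection 𝔥) +
          Complex.exp (-θ k * Complex.I) • (1 - 𝔥.subtypeL ∘L orthogonalProjection 𝔥)) ∘L
        (adjoint U ∘L
          ((Complex.exp (φ k * Complex.I) • (𝔨.subtypeL ∘L orthogonalProjection 𝔨) +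
            Complex.exp (-φ k * Complex.I) • (1 - 𝔨.subtypeL ∘L orthogonalProjection 𝔨)) ∘L U)))
    (hWn0 : Wn 0 = 1) (hWnS : ∀ n, Wn (n + 1) = W (n + 1) ∘L Wn n)
    (Pp Qp : ℕ → Polynomial ℂ)
    (hPp : ∀ n, Pp n = Polynomial.C (Complex.exp (θ n * Complex.I) * Complex.exp (-φ n * Complex.I)) +
      Polynomial.C (Complex.exp (θ n * Complex.I) * (2 * Complex.I * Real.sin (φ n))) * Polynomial.X)
    (hQp : ∀ n, Qp n = Polynomial.C (2 * Complex.exp (θ n * Complex.I) * Real.sin (φ n)))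
    (Pi' Φ' : ℕ → Polynomial ℂ)
    (hPi0 : Pi' 0 = 1) (hΦ0 : Φ' 0 = 0)
    (hPi : ∀ n : ℕ, 1 ≤ n → Pi' n = Pp n * Pi' (n - 1) -
      Qp n * (Φ' (n - 1)).map (starRingEnd ℂ) * (1 - Polynomial.X) * Polynomial.X)
    (hΦ : ∀ n : ℕ, 1 ≤ n → Φ' n = Pp n * Φ' (n - 1) +
      Qp n * (Pi' (n - 1)).map (starRingEnd ℂ))
    (σ : ℝ) (hσ : σ ∈ Set.Ioo (0 : ℝ) 1) (fσ : 𝔨)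
    (hf : A (adjoint A fσ) = ((σ : ℂ) ^ 2) • fσ)
    (e₁ e₂ : H)
    (he₁ : e₁ = ((σ : ℂ))⁻¹ • ((adjoint A fσ : 𝔥) : H))
    (he₂ : e₂ = ((Real.sqrt (1 - σ ^ 2) : ℂ))⁻¹ • ((adjoint B fσ : 𝔥ᗮ) : H))
    (Uσ : Matrix (Fin 2) (Fin 2) ℂ)
    (hUσ : Uσ = !![(σ : ℂ), (Real.sqrt (1 - σ ^ 2) : ℂ); (Real.sqrt (1 - σ ^ 2) : ℂ), -(σ : ℂ)])
    (Mprod : ℕ → Matrix (Fin 2) (Fin 2) ℂ)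
    (hM0 : Mprod 0 = 1)
    (hMS : ∀ n, Mprod (n + 1) =
      !![Complex.exp (θ (n + 1) * Complex.I), 0; 0, Complex.exp (-θ (n + 1) * Complex.I)] * Uσ *
      !![Complex.exp (φ (n + 1) * Complex.I), 0; 0, Complex.exp (-φ (n + 1) * Complex.I)] * Uσ *
      Mprod n)
    (n : ℕ) :
    (Wn n e₁ = (Pi' n).eval ((σ : ℂ) ^ 2) • e₁ +
      (Complex.I * ((Φ' n).map (starRingEnd ℂ)).eval ((σ : ℂ) ^ 2) *
        (σ : ℂ) * (Real.sqrt (1 - σ ^ 2) : ℂ)) • e₂) ∧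
    (Wn n e₂ = (Complex.I * (Φ' n).eval ((σ : ℂ) ^ 2) *
        (σ : ℂ) * (Real.sqrt (1 - σ ^ 2) : ℂ)) • e₁ +
      ((Pi' n).map (starRingEnd ℂ)).eval ((σ : ℂ) ^ 2) • e₂) ∧
    Mprod n = !![(Pi' n).eval ((σ : ℂ) ^ 2),
        Complex.I * (Φ' n).eval ((σ : ℂ) ^ 2) * (σ : ℂ) * (Real.sqrt (1 - σ ^ 2) : ℂ);
        Complex.I * ((Φ' n).map (starRingEnd ℂ)).eval ((σ : ℂ) ^ 2) *
          (σ : ℂ) * (Real.sqrt (1 - σ ^ 2) : ℂ),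
        ((Pi' n).map (starRingEnd ℂ)).eval ((σ : ℂ) ^ 2)] := by
  obtain ⟨hσ0, hσ1⟩ := hσ
  set t := Real.sqrt (1 - σ ^ 2)
  have hσt : σ ^ 2 + t ^ 2 = 1 := by rw [Real.sq_sqrt (by nlinarith)]; ring
  have ht : t ≠ 0 := (Real.sqrt_pos.mpr (by nlinarith)).ne'
  obtain ⟨g, hg, hUe, hUf⟩ := singularVectors_actsByMatrix hU1 hU2 hA hB
    (s := (σ : ℂ)) (c := (t : ℂ)) (by exact_mod_cast hσt) (by exact_mod_cast hσ0.ne')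
    (by exact_mod_cast ht) hf
  rw [← he₁, ← he₂, ← hUσ] at hUe hUf
  have hW : ∀ n, ActsByMatrix (Wn n) ![e₁, e₂] ![e₁, e₂] (Mprod n) := by
    intro n
    induction n with
    | zero => rw [hWn0, hM0]; exact actsByMatrix_id _
    | succ n ih =>
      rw [hWnS, hMS, hWdef, coe_comp]
      exact (qsvtStep_actsByMatrix 𝔥 𝔨 U (he₁ ▸ smul_mem _ _ (adjoint A fσ).2)
        (he₂ ▸ smul_mem _ _ (adjoint B fσ).2) fσ.2 hg hUe hUf _ _ _ _).comp ih
  have hM : ∀ n, Mprod n =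
      qsvtMatrix σ t ((Pi' n).eval ((σ : ℂ) ^ 2)) ((Φ' n).eval ((σ : ℂ) ^ 2)) := by
    intro n
    induction n with
    | zero => rw [hM0, hPi0, hΦ0, eval_one, eval_zero, qsvtMatrix_one_zero]
    | succ n ih =>
      rw [hMS, ih, hUσ, qsvtMatrix_eval_succ hσt _ _ (hPp _) (hQp _) (hPi (n + 1) (by omega))
        (hΦ (n + 1) (by omega)), Nat.add_sub_cancel]
  have hx : (starRingEnd ℂ) ((σ : ℂ) ^ 2) = (σ : ℂ) ^ 2 := by simp
  simpa only [hM n, qsvtMatrix, eval_map_conj hx, and_true, Matrix.of_apply, Matrix.cons_val',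
    Matrix.cons_val_zero, Matrix.cons_val_one, Matrix.cons_val_fin_one] using
    actsByMatrix_fin_two_iff.mp (hW n)

open ContinuousLinearMap Complex Submodule Polynomial in
theorem stmt16
    {H : Type*} [NormedAddCommGroup H] [InnerProductSpace ℂ H] [CompleteSpace H]
    (𝔥 𝔨 : Submodule ℂ H) [CompleteSpace 𝔥] [CompleteSpace 𝔨]
    (U : H →L[ℂ] H) (hU1 : adjoint U ∘L U = 1) (hU2 : U ∘L adjoint U = 1)
    (A : 𝔥 →L[ℂ] 𝔨) (B : 𝔥ᗮ →L[ℂ] 𝔨) (C : 𝔥 →L[ℂ] 𝔨ᗮ) (D : 𝔥ᗮ →L[ℂ] 𝔨ᗮ)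
    (hA : ∀ x : 𝔥, A x = orthogonalProjection 𝔨 (U x))
    (hB : ∀ y : 𝔥ᗮ, B y = orthogonalProjection 𝔨 (U y))
    (hC : ∀ x : 𝔥, C x = orthogonalProjection 𝔨ᗮ (U x))
    (hD : ∀ y : 𝔥ᗮ, D y = orthogonalProjection 𝔨ᗮ (U y))
    (θ φ : ℕ → ℝ) (W Wn : ℕ → (H →L[ℂ] H))
    (hWdef : ∀ k, W k = (Complex.exp (θ k * Complex.I) • (𝔥.subtypeL ∘L orthogonalProjection 𝔥) +
          Complex.exp (-θ k * Complex.I) • (1 - 𝔥.subtypeL ∘L orthogonalProjection 𝔥)) ∘L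
        (adjoint U ∘L
          ((Complex.exp (φ k * Complex.I) • (𝔨.subtypeL ∘L orthogonalProjection 𝔨) +
            Complex.exp (-φ k * Complex.I) • (1 - 𝔨.subtypeL ∘L orthogonalProjection 𝔨)) ∘L U)))
    (hWn0 : Wn 0 = 1) (hWnS : ∀ n, Wn (n + 1) = W (n + 1) ∘L Wn n)
    (Pp Qp : ℕ → Polynomial ℂ)
    (hPp : ∀ n, Pp n = Polynomial.C (Complex.exp (θ n * Complex.I) * Complex.exp (-φ n * Complex.I)) +
      Polynomial.C (Complex.exp (θ n * Complex.I) * (2 * Complex.I * Real.sin (φ n))) * Polynomial.X)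
    (hQp : ∀ n, Qp n = Polynomial.C (2 * Complex.exp (θ n * Complex.I) * Real.sin (φ n)))
    (Pi' Φ' : ℕ → Polynomial ℂ)
    (hPi0 : Pi' 0 = 1) (hΦ0 : Φ' 0 = 0)
    (hPi : ∀ n : ℕ, 1 ≤ n → Pi' n = Pp n * Pi' (n - 1) -
      Qp n * (Φ' (n - 1)).map (starRingEnd ℂ) * (1 - Polynomial.X) * Polynomial.X)
    (hΦ : ∀ n : ℕ, 1 ≤ n → Φ' n = Pp n * Φ' (n - 1) +
      Qp n * (Pi' (n - 1)).map (starRingEnd ℂ))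
    (σ : ℝ) (hσ : σ ∈ Set.Ioo (0 : ℝ) 1) (fσ : 𝔨) (hfnorm : ‖fσ‖ = 1)
    (hf : A (adjoint A fσ) = ((σ : ℂ) ^ 2) • fσ)
    (e₁ e₂ : H)
    (he₁ : e₁ = ((σ : ℂ))⁻¹ • ((adjoint A fσ : 𝔥) : H))
    (he₂ : e₂ = ((Real.sqrt (1 - σ ^ 2) : ℂ))⁻¹ • ((adjoint B fσ : 𝔥ᗮ) : H))
    (Uσ Zm : Matrix (Fin 2) (Fin 2) ℂ)
    (hUσ : Uσ = !![(σ : ℂ), (Real.sqrt (1 - σ ^ 2) : ℂ); (Real.sqrt (1 - σ ^ 2) : ℂ), -(σ : ℂ)])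
    (Mprod : ℕ → Matrix (Fin 2) (Fin 2) ℂ)
    (hM0 : Mprod 0 = 1)
    (hMS : ∀ n, Mprod (n + 1) =
      !![Complex.exp (θ (n + 1) * Complex.I), 0; 0, Complex.exp (-θ (n + 1) * Complex.I)] * Uσ *
      !![Complex.exp (φ (n + 1) * Complex.I), 0; 0, Complex.exp (-φ (n + 1) * Complex.I)] * Uσ *
      Mprod n)
    (n : ℕ) :
    (Wn n e₁ = (Pi' n).eval ((σ : ℂ) ^ 2) • e₁ +
      (Complex.I * ((Φ' n).map (starRingEnd ℂ)).eval ((σ : ℂ) ^ 2) *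
        (σ : ℂ) * (Real.sqrt (1 - σ ^ 2) : ℂ)) • e₂) ∧
    (Wn n e₂ = (Complex.I * (Φ' n).eval ((σ : ℂ) ^ 2) *
        (σ : ℂ) * (Real.sqrt (1 - σ ^ 2) : ℂ)) • e₁ +
      ((Pi' n).map (starRingEnd ℂ)).eval ((σ : ℂ) ^ 2) • e₂) ∧
    Mprod n = !![(Pi' n).eval ((σ : ℂ) ^ 2),
        Complex.I * (Φ' n).eval ((σ : ℂ) ^ 2) * (σ : ℂ) * (Real.sqrt (1 - σ ^ 2) : ℂ);
        Complex.I * ((Φ' n).map (starRingEnd ℂ)).eval ((σ : ℂ) ^ 2) *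
          (σ : ℂ) * (Real.sqrt (1 - σ ^ 2) : ℂ),
        ((Pi' n).map (starRingEnd ℂ)).eval ((σ : ℂ) ^ 2)] :=
  stmt16_general 𝔥 𝔨 U hU1 hU2 A B hA hB θ φ W Wn hWdef hWn0 hWnS Pp Qp hPp hQp Pi' Φ' hPi0 hΦ0 hPi
    hΦ σ hσ fσ hf e₁ e₂ he₁ he₂ Uσ hUσ Mprod hM0 hMS n
end

section
/- Fix θ, φ ∈ ℝ and σ = cos k with k ∈ [0, π/2]. Let V := e^{iθZ} U_σ e^{iφZ} U_σ, where Z = diag(1,−1) and U_σ = [[σ, √(1−σ²)],[√(1−σ²), −σ]]. Set γ := cos θ cos φ − sin θ sin φ cos 2k and ζ := sin θ cos φ + sin φ cos θ cos 2k. Then for all n ≥ 1, V^n = [[T_n(γ) + iζ U_{n−1}(γ), i e^{iθ} sin φ sin 2k · U_{n−1}(γ)],[i e^{−iθ} sin φ sin 2k · U_{n−1}(γ), T_n(γ) − iζ U_{n−1}(γ)]], where T_n and U_{n−1} are the Chebyshev polynomials of the first and second kind. -/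
open Complex Polynomial in
lemma stmt17_aux (x z p q : ℂ) (h : p * q = x ^ 2 + z ^ 2 - 1) : ∀ m : ℕ,
    (!![x + Complex.I * z, p; q, x - Complex.I * z]) ^ (m + 1) =
      !![(Polynomial.Chebyshev.T ℂ (m + 1)).eval x +
          Complex.I * z * (Polynomial.Chebyshev.U ℂ m).eval x,
          p * (Polynomial.Chebyshev.U ℂ m).eval x;
          q * (Polynomial.Chebyshev.U ℂ m).eval x,
          (Polynomial.Chebyshev.T ℂ (m + 1)).eval x -
            Complex.I * z * (Polynomial.Chebyshev.U ℂ m).eval x] := by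
  intro m
  induction m with
  | zero =>
    simp [Polynomial.Chebyshev.T_one, Polynomial.Chebyshev.U_zero]
  | succ m ih =>
    have hT := congrArg (Polynomial.eval x)
      (Polynomial.Chebyshev.T_eq_X_mul_T_sub_pol_U ℂ m)
    have hU := congrArg (Polynomial.eval x)
      (Polynomial.Chebyshev.U_eq_X_mul_U_add_T ℂ m)
    simp only [Polynomial.eval_sub, Polynomial.eval_mul, Polynomial.eval_add,
      Polynomial.eval_one, Polynomial.eval_pow, Polynomial.eval_X] at hT hU
    have key : ((m : ℤ) + 1 + 1) = ((m + 1 : ℕ) : ℤ) + 1 := by push_cast; ring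
    rw [pow_succ, ih, Matrix.mul_fin_two]
    rw [show ((m + 1 : ℕ) : ℤ) + 1 = (m : ℤ) + 2 by push_cast; ring,
      show ((m + 1 : ℕ) : ℤ) = (m : ℤ) + 1 by push_cast; ring]
    ext i j
    fin_cases i <;> fin_cases j <;>
      simp only [Fin.zero_eta, Fin.mk_one, Matrix.cons_val', Matrix.cons_val_zero,
        Matrix.cons_val_one, Matrix.head_cons, Matrix.empty_val', Matrix.cons_val_fin_one,
        Matrix.head_fin_const, Matrix.of_apply] <;>
      simp only [hT, hU] <;>
      first
      | ring1
      | linear_combination (Polynomial.Chebyshev.U ℂ (m : ℤ)).eval x * h +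
          z ^ 2 * (Polynomial.Chebyshev.U ℂ (m : ℤ)).eval x * Complex.I_sq

open ContinuousLinearMap Complex Submodule Polynomial in
theorem stmt17
    (θ φ k : ℝ) (hk : k ∈ Set.Icc 0 (Real.pi / 2)) (σ : ℝ) (hσ : σ = Real.cos k)
    (Uσ V : Matrix (Fin 2) (Fin 2) ℂ)
    (hUσ : Uσ = !![(σ : ℂ), (Real.sqrt (1 - σ ^ 2) : ℂ); (Real.sqrt (1 - σ ^ 2) : ℂ), -(σ : ℂ)])
    (hV : V = !![Complex.exp (θ * Complex.I), 0; 0, Complex.exp (-θ * Complex.I)] * Uσ *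
      !![Complex.exp (φ * Complex.I), 0; 0, Complex.exp (-φ * Complex.I)] * Uσ)
    (γ ζ : ℝ)
    (hγ : γ = Real.cos θ * Real.cos φ - Real.sin θ * Real.sin φ * Real.cos (2 * k))
    (hζ : ζ = Real.sin θ * Real.cos φ + Real.sin φ * Real.cos θ * Real.cos (2 * k))
    (n : ℕ) (hn : 1 ≤ n) :
    V ^ n = !![(Polynomial.Chebyshev.T ℂ n).eval (γ : ℂ) +
        Complex.I * (ζ : ℂ) * (Polynomial.Chebyshev.U ℂ (n - 1)).eval (γ : ℂ),
        Complex.I * Complex.exp (θ * Complex.I) * Real.sin φ * Real.sin (2 * k) *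
          (Polynomial.Chebyshev.U ℂ (n - 1)).eval (γ : ℂ);
        Complex.I * Complex.exp (-θ * Complex.I) * Real.sin φ * Real.sin (2 * k) *
          (Polynomial.Chebyshev.U ℂ (n - 1)).eval (γ : ℂ),
        (Polynomial.Chebyshev.T ℂ n).eval (γ : ℂ) -
          Complex.I * (ζ : ℂ) * (Polynomial.Chebyshev.U ℂ (n - 1)).eval (γ : ℂ)] := by
  -- √(1-σ²) = sin k
  have hsin : Real.sqrt (1 - σ ^ 2) = Real.sin k := by
    rw [hσ, show (1 : ℝ) - Real.cos k ^ 2 = Real.sin k ^ 2 by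
      nlinarith [Real.sin_sq_add_cos_sq k]]
    exact Real.sqrt_sq (Real.sin_nonneg_of_nonneg_of_le_pi hk.1
      (le_trans hk.2 (by linarith [Real.pi_pos])))
  -- explicit form of V
  have hVe : V = !![(γ : ℂ) + Complex.I * (ζ : ℂ),
      Complex.I * Complex.exp (θ * Complex.I) * Real.sin φ * Real.sin (2 * k);
      Complex.I * Complex.exp (-θ * Complex.I) * Real.sin φ * Real.sin (2 * k),
      (γ : ℂ) - Complex.I * (ζ : ℂ)] := by
    have hs2c : Complex.sin k ^ 2 = 1 - Complex.cos k ^ 2 := by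
      linear_combination Complex.sin_sq_add_cos_sq (k : ℂ)
    rw [hV, hUσ, hsin, hσ, Matrix.mul_fin_two, Matrix.mul_fin_two, Matrix.mul_fin_two, hγ, hζ]
    ext i j
    fin_cases i <;> fin_cases j <;>
      simp only [Fin.zero_eta, Fin.mk_one, Matrix.cons_val', Matrix.cons_val_zero,
        Matrix.cons_val_one, Matrix.head_cons, Matrix.empty_val', Matrix.cons_val_fin_one,
        Matrix.head_fin_const, Matrix.of_apply] <;>
      push_cast <;>
      simp only [← neg_mul, Complex.exp_mul_I, Complex.cos_neg, Complex.sin_neg,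
        Complex.cos_two_mul, Complex.sin_two_mul] <;>
      first
      | ring1
      | linear_combination ((Complex.cos θ + Complex.sin θ * Complex.I) *
            (Complex.cos φ - Complex.sin φ * Complex.I)) * hs2c +
          (Complex.sin θ * Complex.sin φ * (2 * Complex.cos k ^ 2 - 1)) * Complex.I_sq
      | linear_combination ((Complex.cos θ - Complex.sin θ * Complex.I) *
            (Complex.cos φ + Complex.sin φ * Complex.I)) * hs2c +
          (Complex.sin θ * Complex.sin φ * (2 * Complex.cos k ^ 2 - 1)) * Complex.I_sq
  have hpq : (Complex.I * Complex.exp (θ * Complex.I) * Real.sin φ * Real.sin (2 * k)) *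
      (Complex.I * Complex.exp (-θ * Complex.I) * Real.sin φ * Real.sin (2 * k)) =
      (γ : ℂ) ^ 2 + (ζ : ℂ) ^ 2 - 1 := by
    have he : Complex.exp (θ * Complex.I) * Complex.exp (-θ * Complex.I) = 1 := by
      rw [← Complex.exp_add]; simp
    have hr : (γ : ℝ) ^ 2 + ζ ^ 2 - 1 = -(Real.sin φ * Real.sin (2 * k)) ^ 2 := by
      subst hγ hζ
      linear_combination (Real.cos φ ^ 2 + Real.sin φ ^ 2 * Real.cos (2 * k) ^ 2) *
        Real.sin_sq_add_cos_sq θ + Real.sin_sq_add_cos_sq φ +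
        Real.sin φ ^ 2 * Real.sin_sq_add_cos_sq (2 * k)
    rw [show ((γ : ℂ) ^ 2 + (ζ : ℂ) ^ 2 - 1) = ((γ ^ 2 + ζ ^ 2 - 1 : ℝ) : ℂ) by push_cast; ring,
      hr]
    push_cast
    linear_combination (-(Complex.sin φ) ^ 2 * (Complex.sin (2 * k)) ^ 2) * he +
      ((Complex.sin φ) ^ 2 * (Complex.sin (2 * k)) ^ 2 * Complex.exp (θ * Complex.I) *
        Complex.exp (-θ * Complex.I)) * Complex.I_sq
  obtain ⟨m, rfl⟩ : ∃ m, n = m + 1 := ⟨n - 1, (Nat.succ_pred_eq_of_pos hn).symm⟩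
  rw [hVe, stmt17_aux _ _ _ _ hpq m,
    show ((m + 1 : ℕ) : ℤ) = (m : ℤ) + 1 by push_cast; ring,
    show ((m : ℤ) + 1 - 1) = (m : ℤ) by ring]
end

section
/- Fix θ, φ ∈ ℝ, σ = cos k with k ∈ (0, π/2). The eigenvalues of the 2×2 matrix V := e^{iθZ} U_σ e^{iφZ} U_σ are e^{±iλ}, where cos λ = cos θ cos φ − sin θ sin φ cos 2k. In particular, V has trace 2(cos θ cos φ − sin θ sin φ cos 2k) and determinant 1. -/
lemma mem_spectrum_of_quad (V : Matrix (Fin 2) (Fin 2) ℂ) (μ : ℂ)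
    (h : μ ^ 2 - V.trace * μ + V.det = 0) : μ ∈ spectrum ℂ V := by
  rw [spectrum.mem_iff]
  intro hu
  rw [Matrix.isUnit_iff_isUnit_det, isUnit_iff_ne_zero] at hu
  apply hu
  rw [Matrix.det_fin_two]
  simp only [Matrix.sub_apply, Matrix.algebraMap_matrix_apply]
  rw [Matrix.trace_fin_two, Matrix.det_fin_two] at h
  norm_num
  linear_combination h

open ContinuousLinearMap Complex Submodule Polynomial in
theorem stmt18
    (θ φ k : ℝ) (hk : k ∈ Set.Ioo 0 (Real.pi / 2)) (σ : ℝ) (hσ : σ = Real.cos k)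
    (Uσ V : Matrix (Fin 2) (Fin 2) ℂ)
    (hUσ : Uσ = !![(σ : ℂ), (Real.sqrt (1 - σ ^ 2) : ℂ); (Real.sqrt (1 - σ ^ 2) : ℂ), -(σ : ℂ)])
    (hV : V = !![Complex.exp (θ * Complex.I), 0; 0, Complex.exp (-θ * Complex.I)] * Uσ *
      !![Complex.exp (φ * Complex.I), 0; 0, Complex.exp (-φ * Complex.I)] * Uσ) :
    (∃ lam : ℝ,
      Real.cos lam = Real.cos θ * Real.cos φ - Real.sin θ * Real.sin φ * Real.cos (2 * k) ∧
      Complex.exp (lam * Complex.I) ∈ spectrum ℂ V ∧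
      Complex.exp (-lam * Complex.I) ∈ spectrum ℂ V) ∧
    V.trace = 2 * ((Real.cos θ * Real.cos φ - Real.sin θ * Real.sin φ * Real.cos (2 * k) : ℝ) : ℂ) ∧
    V.det = 1 := by
  have hσ2 : 1 - σ ^ 2 ≥ 0 := by
    rw [hσ]; nlinarith [Real.neg_one_le_cos k, Real.cos_le_one k]
  have hs2 : ((Real.sqrt (1 - σ ^ 2) : ℝ) : ℂ) ^ 2 = 1 - (σ : ℂ) ^ 2 := by
    rw [← Complex.ofReal_pow, Real.sq_sqrt hσ2]; push_cast; ring
  have h2k : Real.cos (2 * k) = 2 * σ ^ 2 - 1 := by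
    rw [Real.cos_two_mul, hσ]
  -- trace
  have htr : V.trace =
      2 * ((Real.cos θ * Real.cos φ - Real.sin θ * Real.sin φ * Real.cos (2 * k) : ℝ) : ℂ) := by
    rw [hV, hUσ, Matrix.mul_fin_two, Matrix.mul_fin_two, Matrix.mul_fin_two,
      Matrix.trace_fin_two_of, h2k]
    push_cast
    simp only [Complex.exp_mul_I, Complex.cos_neg, Complex.sin_neg]
    linear_combination (2 * Complex.cos θ * Complex.cos φ
        - 2 * Complex.sin θ * Complex.sin φ * Complex.I ^ 2) * hs2
      + (2 * Complex.sin θ * Complex.sin φ * (2 * (σ:ℂ) ^ 2 - 1)) * Complex.I_sq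
  -- determinant
  have hdet : V.det = 1 := by
    rw [hV, hUσ, Matrix.det_mul, Matrix.det_mul, Matrix.det_mul]
    simp only [Matrix.det_fin_two_of, ← Complex.exp_add]
    norm_num
    linear_combination ((σ:ℂ)^2 + ((Real.sqrt (1 - σ ^ 2) : ℝ) : ℂ)^2 + 1) * hs2
  -- bound for the cosine value
  set t : ℝ := Real.cos θ * Real.cos φ - Real.sin θ * Real.sin φ * Real.cos (2 * k) with ht
  have e3 : Real.cos (2 * k) = Real.cos k ^ 2 - Real.sin k ^ 2 := by
    rw [Real.cos_two_mul]; nlinarith [Real.sin_sq_add_cos_sq k]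
  have key : t = Real.cos k ^ 2 * Real.cos (θ + φ) + Real.sin k ^ 2 * Real.cos (θ - φ) := by
    rw [ht, e3, Real.cos_add, Real.cos_sub]
    linear_combination (-(Real.cos θ * Real.cos φ)) * Real.sin_sq_add_cos_sq k
  have pk := Real.sin_sq_add_cos_sq k
  have p1 : Real.cos k ^ 2 * (1 - Real.cos (θ + φ)) ≥ 0 :=
    mul_nonneg (sq_nonneg _) (by linarith [Real.cos_le_one (θ + φ)])
  have p2 : Real.sin k ^ 2 * (1 - Real.cos (θ - φ)) ≥ 0 :=
    mul_nonneg (sq_nonneg _) (by linarith [Real.cos_le_one (θ - φ)])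
  have p3 : Real.cos k ^ 2 * (1 + Real.cos (θ + φ)) ≥ 0 :=
    mul_nonneg (sq_nonneg _) (by linarith [Real.neg_one_le_cos (θ + φ)])
  have p4 : Real.sin k ^ 2 * (1 + Real.cos (θ - φ)) ≥ 0 :=
    mul_nonneg (sq_nonneg _) (by linarith [Real.neg_one_le_cos (θ - φ)])
  have hub : t ≤ 1 := by nlinarith [key, p1, p2, pk]
  have hlb : -1 ≤ t := by nlinarith [key, p3, p4, pk]
  refine ⟨⟨Real.arccos t, Real.cos_arccos hlb hub, ?_, ?_⟩, htr, hdet⟩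
  · apply mem_spectrum_of_quad
    rw [htr, hdet]
    rw [show ((t : ℝ) : ℂ) = Complex.cos ((Real.arccos t : ℝ) : ℂ) by
      rw [← Complex.ofReal_cos, Real.cos_arccos hlb hub]]
    simp only [Complex.exp_mul_I, Complex.cos_neg, Complex.sin_neg]
    linear_combination (Complex.sin ((Real.arccos t : ℝ) : ℂ)) ^ 2 * Complex.I_sq
      - Complex.sin_sq_add_cos_sq ((Real.arccos t : ℝ) : ℂ)
  · apply mem_spectrum_of_quad
    rw [htr, hdet]
    rw [show ((t : ℝ) : ℂ) = Complex.cos ((Real.arccos t : ℝ) : ℂ) by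
      rw [← Complex.ofReal_cos, Real.cos_arccos hlb hub]]
    simp only [Complex.exp_mul_I, Complex.cos_neg, Complex.sin_neg]
    linear_combination (Complex.sin ((Real.arccos t : ℝ) : ℂ)) ^ 2 * Complex.I_sq
      - Complex.sin_sq_add_cos_sq ((Real.arccos t : ℝ) : ℂ)
end

section
/- Let W = R_𝔥(θ)U*R_𝔨(φ)U be the single-step QSVT operator, and let σ ∈ (0,1), AA*f_σ = σ²f_σ, σ = cos k. Let λ satisfy cos λ = cos θ cos φ − sin θ sin φ cos 2k with sin λ ≠ 0, and suppose e^{±iλ} ≠ e^{i(φ−θ)} and e^{±iλ} ≠ e^{−i(θ+φ)}. Then the vectors v_± := (A*/(1 − e^{i(φ−θ)}e^{±iλ})) f_σ ⊕ (B*/(1 − e^{i(θ+φ)}e^{±iλ})) f_σ satisfy W v_± = e^{±iλ} v_±, i.e., they are eigenvectors of W with eigenvalues e^{±iλ}. -/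
/-!
Put `a = A* f` and `b = B* f`. Since `A* = P_𝔥 U*|_𝔨` and `B* = P_𝔥ᗮ U*|_𝔨`, we have
`a + b = U* f`, and `U a = σ² f + g` with `g ⊥ 𝔨`. Hence `U b = (1 - σ²) f - g` and
`U* g = (1 - σ²) a - σ² b`, so the plane spanned by `a ∈ 𝔥` and `b ∈ 𝔥ᗮ` is invariant under `W`.
On it `W` acts by a `2 × 2` matrix of determinant `1` and trace
`2 (σ² cos (θ + φ) + (1 - σ²) cos (φ - θ)) = 2 cos λ`, whose eigenvectors for `e^{± i λ}` are
the stated ones.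
-/

open ContinuousLinearMap Complex Submodule

noncomputable def Submodule.phaseReflection {H : Type*} [NormedAddCommGroup H]
    [InnerProductSpace ℂ H] (K : Submodule ℂ H) [K.HasOrthogonalProjection] (t : ℂ) :
    H →L[ℂ] H :=
  exp (t * I) • K.starProjection + exp (-t * I) • (1 - K.starProjection)

theorem Submodule.phaseReflection_apply_add {H : Type*} [NormedAddCommGroup H]
    [InnerProductSpace ℂ H] (K : Submodule ℂ H) [K.HasOrthogonalProjection] (t : ℂ) {u v : H}
    (hu : u ∈ K) (hv : v ∈ Kᗮ) :
    K.phaseReflection t (u + v) = exp (t * I) • u + exp (-t * I) • v := by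
  have hPu : K.starProjection u = u := starProjection_eq_self_iff.2 hu
  have hPv : K.starProjection v = 0 := (K.starProjection_apply_eq_zero_iff).2 hv
  simp only [phaseReflection, add_apply, smul_apply, sub_apply, one_def, id_apply, map_add, hPu,
    hPv]
  module

-- `hchar` is the characteristic equation `μ² - (tr M) μ + det M = 0` of the matrix `M` of the
-- QSVT step on `span {a, b}` (with `x = e^{iθ}`, `y = e^{iφ}`, `s = σ²`, and `det M = 1`); the
-- conclusion says that `(α, β) = ((1 - μ y / x)⁻¹, (1 - μ x y)⁻¹)` satisfies `M (α, β) = μ (α, β)`.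
theorem eigen_coeffs_of_char_eq {x y μ s : ℂ} (hx : x ≠ 0) (hy : y ≠ 0) (hμ : μ ≠ 0)
    (h₁ : 1 - y / x * μ ≠ 0) (h₂ : 1 - x * y * μ ≠ 0)
    (hchar : μ + μ⁻¹ = s * (x * y + (x * y)⁻¹) + (1 - s) * (y / x + x / y)) :
    x * (y * ((1 - y / x * μ)⁻¹ * s + (1 - x * y * μ)⁻¹ * (1 - s)) +
        y⁻¹ * ((1 - y / x * μ)⁻¹ - (1 - x * y * μ)⁻¹) * (1 - s)) = μ * (1 - y / x * μ)⁻¹ ∧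
    x⁻¹ * (y * ((1 - y / x * μ)⁻¹ * s + (1 - x * y * μ)⁻¹ * (1 - s)) -
        y⁻¹ * ((1 - y / x * μ)⁻¹ - (1 - x * y * μ)⁻¹) * s) = μ * (1 - x * y * μ)⁻¹ := by
  have h₁' : x - y * μ ≠ 0 := by
    contrapose! h₁; field_simp; linear_combination h₁
  field_simp at hchar
  constructor <;> field_simp <;> linear_combination y * hchar

theorem coe_adjoint_apply_eq_starProjection {H : Type*} [NormedAddCommGroup H]
    [InnerProductSpace ℂ H] [CompleteSpace H] {K L : Submodule ℂ H} [CompleteSpace K]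
    [CompleteSpace L] {U : H →L[ℂ] H} {A : K →L[ℂ] L}
    (hA : ∀ x : K, A x = L.orthogonalProjectionOnto (U x)) (y : L) :
    (adjoint A y : H) = K.starProjection (adjoint U y) := by
  have : A = L.orthogonalProjectionOnto ∘L U ∘L K.subtypeL := by ext x; simp [hA]
  rw [this, adjoint_comp, adjoint_comp, adjoint_orthogonalProjectionOnto, adjoint_subtypeL]
  rfl

section InvariantPlane

variable {H : Type*} [NormedAddCommGroup H] [InnerProductSpace ℂ H]
  (𝔥 𝔨 : Submodule ℂ H) [𝔥.HasOrthogonalProjection] [𝔨.HasOrthogonalProjection]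
  {U V : H →L[ℂ] H} {a b f : H} {s : ℂ}

theorem phaseReflection_comp_apply_plane (hVU : V ∘L U = 1) (ha : a ∈ 𝔥) (hb : b ∈ 𝔥ᗮ)
    (hf : f ∈ 𝔨) (hUab : U (a + b) = f) (hUa : U a - s • f ∈ 𝔨ᗮ) (θ φ α β : ℂ) :
    (𝔥.phaseReflection θ ∘L V ∘L 𝔨.phaseReflection φ ∘L U) (α • a + β • b) =
      (exp (θ * I) * (exp (φ * I) * (α * s + β * (1 - s)) + exp (-φ * I) * (α - β) * (1 - s))) • a +
      (exp (-θ * I) * (exp (φ * I) * (α * s + β * (1 - s)) - exp (-φ * I) * (α - β) * s)) • b := by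
  set g := U a - s • f
  have hVU' (x : H) : V (U x) = x := by simpa using congr($hVU x)
  have hUv : U (α • a + β • b) = (α * s + β * (1 - s)) • f + (α - β) • g := by
    have hUb : U b = f - U a := by rw [← hUab, map_add]; abel
    rw [map_add, map_smul, map_smul, hUb]
    module
  have hVf : V f = a + b := by rw [← hUab, hVU']
  have hVg : V g = (1 - s) • a - s • b := by
    rw [map_sub, map_smul, hVU', hVf]; module
  have hmid : V (𝔨.phaseReflection φ (U (α • a + β • b))) =
      (exp (φ * I) * (α * s + β * (1 - s)) + exp (-φ * I) * (α - β) * (1 - s)) • a +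
      (exp (φ * I) * (α * s + β * (1 - s)) - exp (-φ * I) * (α - β) * s) • b := by
    rw [hUv, phaseReflection_apply_add _ _ (𝔨.smul_mem _ hf) (𝔨ᗮ.smul_mem _ hUa)]
    simp only [map_add, map_smul, hVf, hVg]
    module
  rw [comp_apply, comp_apply, comp_apply, hmid,
    phaseReflection_apply_add _ _ (𝔥.smul_mem _ ha) (𝔥ᗮ.smul_mem _ hb), smul_smul, smul_smul]

theorem phaseReflection_comp_apply_eigenvector (hVU : V ∘L U = 1) (ha : a ∈ 𝔥) (hb : b ∈ 𝔥ᗮ)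
    (hf : f ∈ 𝔨) (hUab : U (a + b) = f) (hUa : U a - s • f ∈ 𝔨ᗮ) (θ φ ℓ : ℂ)
    (hcos : cos ℓ = s * cos (θ + φ) + (1 - s) * cos (φ - θ))
    (h₁ : exp (ℓ * I) * exp ((φ - θ) * I) ≠ 1) (h₂ : exp (-ℓ * I) * exp (-(θ + φ) * I) ≠ 1) :
    (𝔥.phaseReflection θ ∘L V ∘L 𝔨.phaseReflection φ ∘L U)
        ((1 - exp ((φ - θ) * I) * exp (ℓ * I))⁻¹ • a +
          (1 - exp ((θ + φ) * I) * exp (ℓ * I))⁻¹ • b) =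
      exp (ℓ * I) • ((1 - exp ((φ - θ) * I) * exp (ℓ * I))⁻¹ • a +
          (1 - exp ((θ + φ) * I) * exp (ℓ * I))⁻¹ • b) := by
  have hchar : exp (ℓ * I) + exp (-ℓ * I) = s * (exp ((θ + φ) * I) + exp (-(θ + φ) * I)) +
      (1 - s) * (exp ((φ - θ) * I) + exp (-(φ - θ) * I)) := by
    simp only [← two_cos, hcos]; ring
  rw [phaseReflection_comp_apply_plane 𝔥 𝔨 hVU ha hb hf hUab hUa]
  simp only [neg_mul, add_mul θ, sub_mul φ, exp_neg, exp_add, exp_sub, inv_div] at hchar h₁ h₂ ⊢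
  have hx := exp_ne_zero (θ * I)
  have hy := exp_ne_zero (φ * I)
  have hμ := exp_ne_zero (ℓ * I)
  generalize exp (θ * I) = x at *
  generalize exp (φ * I) = y at *
  generalize exp (ℓ * I) = μ at *
  have h₁' : 1 - y / x * μ ≠ 0 := sub_ne_zero.2 (by rw [mul_comm]; exact h₁.symm)
  have h₂' : 1 - x * y * μ ≠ 0 :=
    sub_ne_zero.2 fun h => h₂ (by rw [← mul_inv, mul_comm, ← h, inv_one])
  obtain ⟨e₁, e₂⟩ := eigen_coeffs_of_char_eq hx hy hμ h₁' h₂' hchar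
  rw [e₁, e₂]
  module

end InvariantPlane

open ContinuousLinearMap Complex Submodule Polynomial in
theorem stmt19_general
    {H : Type*} [NormedAddCommGroup H] [InnerProductSpace ℂ H] [CompleteSpace H]
    (𝔥 𝔨 : Submodule ℂ H) [CompleteSpace 𝔥] [CompleteSpace 𝔨]
    (U : H →L[ℂ] H) (hU1 : adjoint U ∘L U = 1) (hU2 : U ∘L adjoint U = 1)
    (A : 𝔥 →L[ℂ] 𝔨) (B : 𝔥ᗮ →L[ℂ] 𝔨)
    (hA : ∀ x : 𝔥, A x = orthogonalProjection 𝔨 (U x))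
    (hB : ∀ y : 𝔥ᗮ, B y = orthogonalProjection 𝔨 (U y))
    (θ φ k : ℝ) (σ : ℝ) (hσ : σ = Real.cos k)
    (fσ : 𝔨)
    (hf : A (adjoint A fσ) = ((σ : ℂ) ^ 2) • fσ)
    (W : H →L[ℂ] H)
    (hW : W = (Complex.exp (θ * Complex.I) • (𝔥.subtypeL ∘L orthogonalProjection 𝔥) +
          Complex.exp (-θ * Complex.I) • (1 - 𝔥.subtypeL ∘L orthogonalProjection 𝔥)) ∘L
        (adjoint U ∘L
          ((Complex.exp (φ * Complex.I) • (𝔨.subtypeL ∘L orthogonalProjection 𝔨) +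
            Complex.exp (-φ * Complex.I) • (1 - 𝔨.subtypeL ∘L orthogonalProjection 𝔨)) ∘L U)))
    (lam : ℝ)
    (hcos : Real.cos lam = Real.cos θ * Real.cos φ - Real.sin θ * Real.sin φ * Real.cos (2 * k))
    (hne1p : Complex.exp (lam * Complex.I) * Complex.exp ((φ - θ) * Complex.I) ≠ 1)
    (hne1m : Complex.exp (-lam * Complex.I) * Complex.exp ((φ - θ) * Complex.I) ≠ 1)
    (hne2p : Complex.exp (lam * Complex.I) * Complex.exp (-(θ + φ) * Complex.I) ≠ 1)
    (hne2m : Complex.exp (-lam * Complex.I) * Complex.exp (-(θ + φ) * Complex.I) ≠ 1) :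
    (W ((1 - Complex.exp ((φ - θ) * Complex.I) * Complex.exp (lam * Complex.I))⁻¹ •
          ((adjoint A fσ : 𝔥) : H) +
        (1 - Complex.exp ((θ + φ) * Complex.I) * Complex.exp (lam * Complex.I))⁻¹ •
          ((adjoint B fσ : 𝔥ᗮ) : H)) =
      Complex.exp (lam * Complex.I) •
        ((1 - Complex.exp ((φ - θ) * Complex.I) * Complex.exp (lam * Complex.I))⁻¹ •
            ((adjoint A fσ : 𝔥) : H) +
          (1 - Complex.exp ((θ + φ) * Complex.I) * Complex.exp (lam * Complex.I))⁻¹ •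
            ((adjoint B fσ : 𝔥ᗮ) : H))) ∧
    (W ((1 - Complex.exp ((φ - θ) * Complex.I) * Complex.exp (-lam * Complex.I))⁻¹ •
          ((adjoint A fσ : 𝔥) : H) +
        (1 - Complex.exp ((θ + φ) * Complex.I) * Complex.exp (-lam * Complex.I))⁻¹ •
          ((adjoint B fσ : 𝔥ᗮ) : H)) =
      Complex.exp (-lam * Complex.I) •
        ((1 - Complex.exp ((φ - θ) * Complex.I) * Complex.exp (-lam * Complex.I))⁻¹ •
            ((adjoint A fσ : 𝔥) : H) +
          (1 - Complex.exp ((θ + φ) * Complex.I) * Complex.exp (-lam * Complex.I))⁻¹ •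
            ((adjoint B fσ : 𝔥ᗮ) : H))) := by
  have hUab : U ((adjoint A fσ : H) + adjoint B fσ) = fσ := by
    rw [coe_adjoint_apply_eq_starProjection hA, coe_adjoint_apply_eq_starProjection hB,
      starProjection_add_starProjection_orthogonal]
    simpa using congr($hU2 fσ)
  have hUa : U (adjoint A fσ) - ((σ : ℂ) ^ 2) • (fσ : H) ∈ 𝔨ᗮ := by
    rw [← starProjection_apply_eq_zero_iff, map_sub, starProjection_apply, ← hA, hf]
    simp
  have hcosC : cos lam = (σ : ℂ) ^ 2 * cos (θ + φ) + (1 - (σ : ℂ) ^ 2) * cos (φ - θ) := by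
    have : Real.cos lam = σ ^ 2 * Real.cos (θ + φ) + (1 - σ ^ 2) * Real.cos (φ - θ) := by
      rw [hcos, hσ, Real.cos_two_mul, Real.cos_add, Real.cos_sub]; ring
    exact_mod_cast this
  have hW' : W = 𝔥.phaseReflection θ ∘L adjoint U ∘L 𝔨.phaseReflection φ ∘L U := hW
  rw [hW']
  exact ⟨phaseReflection_comp_apply_eigenvector 𝔥 𝔨 hU1 (coe_mem _) (coe_mem _) (coe_mem _) hUab
      hUa θ φ lam hcosC hne1p hne2m,
    phaseReflection_comp_apply_eigenvector 𝔥 𝔨 hU1 (coe_mem _) (coe_mem _) (coe_mem _) hUab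
      hUa θ φ (-lam) (by rw [cos_neg, hcosC]) hne1m (by rwa [neg_neg])⟩

open ContinuousLinearMap Complex Submodule Polynomial in
theorem stmt19
    {H : Type*} [NormedAddCommGroup H] [InnerProductSpace ℂ H] [CompleteSpace H]
    (𝔥 𝔨 : Submodule ℂ H) [CompleteSpace 𝔥] [CompleteSpace 𝔨]
    (U : H →L[ℂ] H) (hU1 : adjoint U ∘L U = 1) (hU2 : U ∘L adjoint U = 1)
    (A : 𝔥 →L[ℂ] 𝔨) (B : 𝔥ᗮ →L[ℂ] 𝔨) (C : 𝔥 →L[ℂ] 𝔨ᗮ) (D : 𝔥ᗮ →L[ℂ] 𝔨ᗮ)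
    (hA : ∀ x : 𝔥, A x = orthogonalProjection 𝔨 (U x))
    (hB : ∀ y : 𝔥ᗮ, B y = orthogonalProjection 𝔨 (U y))
    (hC : ∀ x : 𝔥, C x = orthogonalProjection 𝔨ᗮ (U x))
    (hD : ∀ y : 𝔥ᗮ, D y = orthogonalProjection 𝔨ᗮ (U y))
    (θ φ k : ℝ) (σ : ℝ) (hσ : σ = Real.cos k) (hσmem : σ ∈ Set.Ioo (0 : ℝ) 1)
    (fσ : 𝔨) (hfnorm : ‖fσ‖ = 1)
    (hf : A (adjoint A fσ) = ((σ : ℂ) ^ 2) • fσ)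
    (W : H →L[ℂ] H)
    (hW : W = (Complex.exp (θ * Complex.I) • (𝔥.subtypeL ∘L orthogonalProjection 𝔥) +
          Complex.exp (-θ * Complex.I) • (1 - 𝔥.subtypeL ∘L orthogonalProjection 𝔥)) ∘L
        (adjoint U ∘L
          ((Complex.exp (φ * Complex.I) • (𝔨.subtypeL ∘L orthogonalProjection 𝔨) +
            Complex.exp (-φ * Complex.I) • (1 - 𝔨.subtypeL ∘L orthogonalProjection 𝔨)) ∘L U)))
    (lam : ℝ)
    (hcos : Real.cos lam = Real.cos θ * Real.cos φ - Real.sin θ * Real.sin φ * Real.cos (2 * k))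
    (hsin : Real.sin lam ≠ 0)
    (hne1p : Complex.exp (lam * Complex.I) * Complex.exp ((φ - θ) * Complex.I) ≠ 1)
    (hne1m : Complex.exp (-lam * Complex.I) * Complex.exp ((φ - θ) * Complex.I) ≠ 1)
    (hne2p : Complex.exp (lam * Complex.I) * Complex.exp (-(θ + φ) * Complex.I) ≠ 1)
    (hne2m : Complex.exp (-lam * Complex.I) * Complex.exp (-(θ + φ) * Complex.I) ≠ 1) :
    (W ((1 - Complex.exp ((φ - θ) * Complex.I) * Complex.exp (lam * Complex.I))⁻¹ •
          ((adjoint A fσ : 𝔥) : H) +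
        (1 - Complex.exp ((θ + φ) * Complex.I) * Complex.exp (lam * Complex.I))⁻¹ •
          ((adjoint B fσ : 𝔥ᗮ) : H)) =
      Complex.exp (lam * Complex.I) •
        ((1 - Complex.exp ((φ - θ) * Complex.I) * Complex.exp (lam * Complex.I))⁻¹ •
            ((adjoint A fσ : 𝔥) : H) +
          (1 - Complex.exp ((θ + φ) * Complex.I) * Complex.exp (lam * Complex.I))⁻¹ •
            ((adjoint B fσ : 𝔥ᗮ) : H))) ∧
    (W ((1 - Complex.exp ((φ - θ) * Complex.I) * Complex.exp (-lam * Complex.I))⁻¹ •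
          ((adjoint A fσ : 𝔥) : H) +
        (1 - Complex.exp ((θ + φ) * Complex.I) * Complex.exp (-lam * Complex.I))⁻¹ •
          ((adjoint B fσ : 𝔥ᗮ) : H)) =
      Complex.exp (-lam * Complex.I) •
        ((1 - Complex.exp ((φ - θ) * Complex.I) * Complex.exp (-lam * Complex.I))⁻¹ •
            ((adjoint A fσ : 𝔥) : H) +
          (1 - Complex.exp ((θ + φ) * Complex.I) * Complex.exp (-lam * Complex.I))⁻¹ •
            ((adjoint B fσ : 𝔥ᗮ) : H))) :=
  stmt19_general 𝔥 𝔨 U hU1 hU2 A B hA hB θ φ k σ hσ fσ hf W hW lam hcos hne1p hne1m hne2p hne2m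
end
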